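/- arXiv:1401.1264 — 18 statements merged into one kernel-verified Lean document; each statement's English description precedes it below -/
import Mathlib

section
/- Let J, K ≥ 1 and let p and q be two joint distributions of (T,X,Y,M) that both satisfy missing mechanism 1 and are both observably positive. If p and q have the same observed data, i.e. p(t,x,y,0) = q(t,x,y,0) for all (t,x,y) and p(t,+,y,1) = q(t,+,y,1) for all (t,y), then p = q (the whole joint distribution is identified by the observed data under missing mechanism 1). -/
lemma mech1_key {J : ℕ} (f : Fin J → Fin 2 → ℝ)
    (hnn : ∀ x m, 0 ≤ f x m) (hpos : ∀ x, 0 < f x 0)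
    (hJ : 1 ≤ J)
    (hmech : ∀ x m, f x m * (∑ x', ∑ m', f x' m') = (∑ m', f x m') * (∑ x', f x' m)) :
    ∀ x, f x 1 * (∑ x', f x' 0) = f x 0 * (∑ x', f x' 1) := by
  intro x
  set B0 := ∑ x', f x' 0 with hB0
  set B1 := ∑ x', f x' 1 with hB1
  have hA : (∑ x', ∑ m', f x' m') = B0 + B1 := by
    rw [hB0, hB1, ← Finset.sum_add_distrib]
    exact Finset.sum_congr rfl (fun x' _ => Fin.sum_univ_two _)
  have hB0pos : 0 < B0 := Finset.sum_pos (fun x' _ => hpos x') (by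
    simp [Finset.univ_nonempty_iff, ← Fin.pos_iff_nonempty]; omega)
  have hB1nn : 0 ≤ B1 := Finset.sum_nonneg (fun x' _ => hnn x' 1)
  have hApos : 0 < B0 + B1 := by linarith
  have h0 := hmech x 0
  have h1 := hmech x 1
  rw [hA, Fin.sum_univ_two] at h0 h1
  -- h0 : f x 0 * (B0 + B1) = (f x 0 + f x 1) * B0
  -- h1 : f x 1 * (B0 + B1) = (f x 0 + f x 1) * B1
  have : (f x 1 * B0) * (B0 + B1) = (f x 0 * B1) * (B0 + B1) := by ring_nf; nlinarith [h0, h1]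
  exact mul_right_cancel₀ (ne_of_gt hApos) this

/-- Under missing mechanism 1 (M ⫫ X | (T,Y)), the joint distribution of
(T,X,Y,M) is identified by the observed data. -/
theorem mechanism1_identifiable (J K : ℕ) (hJ : 1 ≤ J) (hK : 1 ≤ K)
    (p q : Fin 2 → Fin J → Fin K → Fin 2 → ℝ)
    (hp_nonneg : ∀ t x y m, 0 ≤ p t x y m)
    (hp_sum : ∑ t, ∑ x, ∑ y, ∑ m, p t x y m = 1)
    (hq_nonneg : ∀ t x y m, 0 ≤ q t x y m)
    (hq_sum : ∑ t, ∑ x, ∑ y, ∑ m, q t x y m = 1)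
    -- missing mechanism 1: p(t,x,y,m)·p(t,+,y,+) = p(t,x,y,+)·p(t,+,y,m)
    (hp_mech : ∀ t x y m,
      p t x y m * (∑ x', ∑ m', p t x' y m') = (∑ m', p t x y m') * (∑ x', p t x' y m))
    (hq_mech : ∀ t x y m,
      q t x y m * (∑ x', ∑ m', q t x' y m') = (∑ m', q t x y m') * (∑ x', q t x' y m))
    -- observable positivity
    (hp_pos : ∀ t x y, 0 < p t x y 0)
    (hq_pos : ∀ t x y, 0 < q t x y 0)
    -- same observed data
    (hobs0 : ∀ t x y, p t x y 0 = q t x y 0)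
    (hobs1 : ∀ t y, ∑ x, p t x y 1 = ∑ x, q t x y 1) :
    p = q := by
  funext t x y m
  fin_cases m
  · exact hobs0 t x y
  · have hp := mech1_key (fun x m => p t x y m) (fun x m => hp_nonneg t x y m)
      (fun x => hp_pos t x y) hJ (fun x m => hp_mech t x y m) x
    have hq := mech1_key (fun x m => q t x y m) (fun x m => hq_nonneg t x y m)
      (fun x => hq_pos t x y) hJ (fun x m => hq_mech t x y m) x
    have hB0 : (∑ x', p t x' y 0) = ∑ x', q t x' y 0 :=
      Finset.sum_congr rfl (fun x' _ => hobs0 t x' y)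
    have hB0pos : 0 < ∑ x', p t x' y 0 := Finset.sum_pos (fun x' _ => hp_pos t x' y) (by
      simp [Finset.univ_nonempty_iff, ← Fin.pos_iff_nonempty]; omega)
    have : p t x y 1 * (∑ x', p t x' y 0) = q t x y 1 * (∑ x', p t x' y 0) := by
      rw [hp, hobs0 t x y, hobs1 t y, hB0, hq]
    exact mul_right_cancel₀ (ne_of_gt hB0pos) this
end

section
/- Let J, K ≥ 1 and let p and q be two joint distributions of (T,X,Y,M) that both satisfy missing mechanism 2 and are both observably positive. If p(t,x,y,0) = q(t,x,y,0) for all (t,x,y), then the conditional distribution of Y given (T,X) is the same under p and q: p(t,x,y,+)·q(t,x,+,+) = q(t,x,y,+)·p(t,x,+,+) for all (t,x,y). In particular, the subgroup causal effects, which are functions of P(Y=y | T=t, X=x), are identified by the observed data under missing mechanism 2. -/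
/-- Under missing mechanism 2 (M ⫫ Y | (T,X)), the conditional distribution of
Y given (T,X) — hence the subgroup causal effects — is identified by the fully observed
cells p(t,x,y,0) alone. -/
theorem mechanism2_CE_identifiable (J K : ℕ) (hJ : 1 ≤ J) (hK : 1 ≤ K)
    (p q : Fin 2 → Fin J → Fin K → Fin 2 → ℝ)
    (hp_nonneg : ∀ t x y m, 0 ≤ p t x y m)
    (hp_sum : ∑ t, ∑ x, ∑ y, ∑ m, p t x y m = 1)
    (hq_nonneg : ∀ t x y m, 0 ≤ q t x y m)
    (hq_sum : ∑ t, ∑ x, ∑ y, ∑ m, q t x y m = 1)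
    -- missing mechanism 2: p(t,x,y,m)·p(t,x,+,+) = p(t,x,y,+)·p(t,x,+,m)
    (hp_mech : ∀ t x y m,
      p t x y m * (∑ y', ∑ m', p t x y' m') = (∑ m', p t x y m') * (∑ y', p t x y' m))
    (hq_mech : ∀ t x y m,
      q t x y m * (∑ y', ∑ m', q t x y' m') = (∑ m', q t x y m') * (∑ y', q t x y' m))
    -- observable positivity
    (hp_pos : ∀ t x y, 0 < p t x y 0)
    (hq_pos : ∀ t x y, 0 < q t x y 0)
    -- same fully observed cells
    (hobs0 : ∀ t x y, p t x y 0 = q t x y 0) :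
    -- p(t,x,y,+)·q(t,x,+,+) = q(t,x,y,+)·p(t,x,+,+) for all t,x,y
    ∀ t x y, (∑ m, p t x y m) * (∑ y', ∑ m, q t x y' m)
      = (∑ m, q t x y m) * (∑ y', ∑ m, p t x y' m) := by
  intro t x y
  have ha0 : 0 < ∑ y', p t x y' 0 :=
    Finset.sum_pos (fun y' _ => hp_pos t x y') ⟨y, Finset.mem_univ y⟩
  have e1 := hp_mech t x y 0
  have e2 := hq_mech t x y 0
  have hb0 : (∑ y', q t x y' 0) = ∑ y', p t x y' 0 :=
    Finset.sum_congr rfl (fun y' _ => (hobs0 t x y').symm)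
  rw [hb0, ← hobs0 t x y] at e2
  have key : ((∑ m, p t x y m) * (∑ y', ∑ m, q t x y' m)) * (∑ y', p t x y' 0)
      = ((∑ m, q t x y m) * (∑ y', ∑ m, p t x y' m)) * (∑ y', p t x y' 0) := by
    linear_combination (∑ y', ∑ m, p t x y' m) * e2 - (∑ y', ∑ m, q t x y' m) * e1
  exact mul_right_cancel₀ ha0.ne' key
end

section
/- Let J, K ≥ 1 and let p and q be two joint distributions of (T,X,Y,M) that both satisfy missing mechanism 2 and are both observably positive. Suppose p and q have the same observed data (p(t,x,y,0) = q(t,x,y,0) for all (t,x,y) and p(t,+,y,1) = q(t,+,y,1) for all (t,y)), and suppose that for each t ∈ {0,1} the J × K real matrix Θ_t with (x,y) entry p(t,x,y,0) has rank J. Then p = q. -/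
/-- Ratio identity from mechanism 2. -/
lemma mech2_ratio {J K : ℕ} (p : Fin 2 → Fin J → Fin K → Fin 2 → ℝ)
    (hnn : ∀ t x y m, 0 ≤ p t x y m)
    (hpos : ∀ t x y, 0 < p t x y 0)
    (hmech : ∀ t x y m,
      p t x y m * (∑ y', ∑ m', p t x y' m') = (∑ m', p t x y m') * (∑ y', p t x y' m))
    (t : Fin 2) (x : Fin J) (y : Fin K) :
    p t x y 1 * (∑ y', p t x y' 0) = p t x y 0 * (∑ y', p t x y' 1) := by
  have h1 := hmech t x y 1
  have h0 := hmech t x y 0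
  simp only [Fin.sum_univ_two, Finset.sum_add_distrib] at h1 h0
  set B0 := ∑ y', p t x y' 0 with hB0def
  set B1 := ∑ y', p t x y' 1 with hB1def
  have hB0 : 0 < B0 := Finset.sum_pos (fun y' _ => hpos t x y') ⟨y, Finset.mem_univ y⟩
  have hB1 : 0 ≤ B1 := Finset.sum_nonneg (fun y' _ => hnn t x y' 1)
  have hS : (0:ℝ) < B0 + B1 := by linarith
  have : (B0 + B1) * (p t x y 1 * B0) = (B0 + B1) * (p t x y 0 * B1) := by
    linear_combination B0 * h1 - B1 * h0
  exact mul_left_cancel₀ (ne_of_gt hS) this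

lemma full_rank_vecMul_inj {J K : ℕ} (M : Matrix (Fin J) (Fin K) ℝ)
    (h : M.rank = J) (v : Fin J → ℝ) (hv : ∀ y, ∑ x, v x * M x y = 0) : v = 0 := by
  have hmem : v ∈ LinearMap.ker (Matrix.mulVecLin M.transpose) := by
    simp only [LinearMap.mem_ker, Matrix.mulVecLin_apply]
    funext y
    simpa [Matrix.mulVec, dotProduct, mul_comm] using hv y
  have hr : M.transpose.rank = J := by rw [M.rank_transpose]; exact h
  have hrn := LinearMap.finrank_range_add_finrank_ker (Matrix.mulVecLin M.transpose)
  have hfin : Module.finrank ℝ (Fin J → ℝ) = J := Module.finrank_fin_fun ℝ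
  rw [hfin] at hrn
  have hrange : Module.finrank ℝ (LinearMap.range (Matrix.mulVecLin M.transpose)) = J := hr
  have hker : Module.finrank ℝ (LinearMap.ker (Matrix.mulVecLin M.transpose)) = 0 := by omega
  have : LinearMap.ker (Matrix.mulVecLin M.transpose) = ⊥ := Submodule.finrank_eq_zero.mp hker
  rw [this] at hmem
  simpa using hmem


/-- Under missing mechanism 2 (M ⫫ Y | (T,X)), if the J × K matrix
Θ_t = (p(t,x,y,0))_{x,y} has full row rank J for t = 0,1, then the whole joint
distribution is identified by the observed data. -/
theorem mechanism2_joint_identifiable (J K : ℕ) (hJ : 1 ≤ J) (hK : 1 ≤ K)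
    (p q : Fin 2 → Fin J → Fin K → Fin 2 → ℝ)
    (hp_nonneg : ∀ t x y m, 0 ≤ p t x y m)
    (hp_sum : ∑ t, ∑ x, ∑ y, ∑ m, p t x y m = 1)
    (hq_nonneg : ∀ t x y m, 0 ≤ q t x y m)
    (hq_sum : ∑ t, ∑ x, ∑ y, ∑ m, q t x y m = 1)
    -- missing mechanism 2: p(t,x,y,m)·p(t,x,+,+) = p(t,x,y,+)·p(t,x,+,m)
    (hp_mech : ∀ t x y m,
      p t x y m * (∑ y', ∑ m', p t x y' m') = (∑ m', p t x y m') * (∑ y', p t x y' m))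
    (hq_mech : ∀ t x y m,
      q t x y m * (∑ y', ∑ m', q t x y' m') = (∑ m', q t x y m') * (∑ y', q t x y' m))
    -- observable positivity
    (hp_pos : ∀ t x y, 0 < p t x y 0)
    (hq_pos : ∀ t x y, 0 < q t x y 0)
    -- same observed data
    (hobs0 : ∀ t x y, p t x y 0 = q t x y 0)
    (hobs1 : ∀ t y, ∑ x, p t x y 1 = ∑ x, q t x y 1)
    -- rank condition: Rank(Θ_t) = J for t = 0, 1
    (hrank : ∀ t : Fin 2,
      (Matrix.of (fun x y => p t x y 0) : Matrix (Fin J) (Fin K) ℝ).rank = J) :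
    p = q := by
  have hB0 : ∀ t x, 0 < ∑ y', p t x y' 0 := fun t x =>
    Finset.sum_pos (fun y' _ => hp_pos t x y') ⟨⟨0, hK⟩, Finset.mem_univ _⟩
  have hq0eq : ∀ t x, ∑ y', q t x y' 0 = ∑ y', p t x y' 0 := fun t x =>
    Finset.sum_congr rfl (fun y' _ => (hobs0 t x y').symm)
  -- ratios
  set lp : Fin 2 → Fin J → ℝ := fun t x => (∑ y', p t x y' 1) / (∑ y', p t x y' 0) with hlp
  set lq : Fin 2 → Fin J → ℝ := fun t x => (∑ y', q t x y' 1) / (∑ y', p t x y' 0) with hlq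
  have keyp : ∀ t x y, p t x y 1 = p t x y 0 * lp t x := by
    intro t x y
    have h := mech2_ratio p hp_nonneg hp_pos hp_mech t x y
    rw [hlp]
    have hne : (∑ y', p t x y' 0) ≠ 0 := ne_of_gt (hB0 t x)
    field_simp
    linear_combination h
  have keyq : ∀ t x y, q t x y 1 = q t x y 0 * lq t x := by
    intro t x y
    have h := mech2_ratio q hq_nonneg hq_pos hq_mech t x y
    rw [hlq]
    rw [hq0eq t x] at h
    have hne : (∑ y', p t x y' 0) ≠ 0 := ne_of_gt (hB0 t x)
    field_simp
    linear_combination h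
  have hleq : ∀ t x, lp t x = lq t x := by
    intro t x
    have hv : ∀ y, ∑ x', (lp t x' - lq t x') *
        (Matrix.of (fun x y => p t x y 0) : Matrix (Fin J) (Fin K) ℝ) x' y = 0 := by
      intro y
      have h := hobs1 t y
      have : ∑ x', p t x' y 0 * lp t x' = ∑ x', p t x' y 0 * lq t x' := by
        calc ∑ x', p t x' y 0 * lp t x' = ∑ x', p t x' y 1 :=
              Finset.sum_congr rfl (fun x' _ => (keyp t x' y).symm)
          _ = ∑ x', q t x' y 1 := h
          _ = ∑ x', q t x' y 0 * lq t x' :=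
              Finset.sum_congr rfl (fun x' _ => keyq t x' y)
          _ = ∑ x', p t x' y 0 * lq t x' :=
              Finset.sum_congr rfl (fun x' _ => by rw [hobs0 t x' y])
      simp only [Matrix.of_apply, sub_mul]
      rw [Finset.sum_sub_distrib]
      have e1 : ∑ x', lp t x' * p t x' y 0 = ∑ x', p t x' y 0 * lp t x' :=
        Finset.sum_congr rfl (fun x' _ => mul_comm _ _)
      have e2 : ∑ x', lq t x' * p t x' y 0 = ∑ x', p t x' y 0 * lq t x' :=
        Finset.sum_congr rfl (fun x' _ => mul_comm _ _)
      rw [e1, e2, this, sub_self]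
    have := full_rank_vecMul_inj _ (hrank t) (fun x' => lp t x' - lq t x') hv
    have := congrFun this x
    simpa [sub_eq_zero] using this
  funext t x y m
  fin_cases m
  · exact hobs0 t x y
  · show p t x y 1 = q t x y 1
    rw [keyp t x y, keyq t x y, hobs0 t x y, hleq t x]
end

section
/- Let X be binary (J = 2), K ≥ 1, and let p be a joint distribution of (T,X,Y,M) satisfying missing mechanism 2 that is observably positive. Then for each fixed t ∈ {0,1} the following three conditions are equivalent: (i) the 2 × K real matrix Θ_t with (x,y) entry p(t,x,y,0) has rank 2; (ii) X and Y are conditionally dependent given T = t, i.e. it is not the case that p(t,x,y,+)·p(t,+,+,+) = p(t,x,+,+)·p(t,+,y,+) for all (x,y); (iii) X and Y are conditionally dependent given (T = t, M = 0), i.e. it is not the case that p(t,x,y,0)·p(t,+,+,0) = p(t,x,+,0)·p(t,+,y,0) for all (x,y). -/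
/-!
Under missing mechanism 2, `M ⫫ Y | (T, X)` makes each observed row `p(t,x,·,0)` of `Θ_t`
proportional to the full row `p(t,x,·,+)`, with a positive factor depending only on `x`.
For a table with positive total, independence of rows and columns is the vanishing of all its
`2 × 2` minors, which is unaffected by rescaling rows; for a table with two rows it is also the
failure of rank `2`. Hence all three conditions say that some `2 × 2` minor of `Θ_t` is nonzero.
-/

open Finset

section ContingencyTable

variable {ι κ R : Type*}

def MinorsVanish [CommSemiring R] (b : ι → κ → R) : Prop :=
  ∀ x x' y y', b x y * b x' y' = b x y' * b x' y

theorem minorsVanish_mul_left_iff [CommRing R] [IsDomain R] {b : ι → κ → R} {c : ι → R}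
    (hc : ∀ x, c x ≠ 0) : MinorsVanish (fun x y => c x * b x y) ↔ MinorsVanish b := by
  refine ⟨fun h x x' y y' => mul_left_cancel₀ (mul_ne_zero (hc x) (hc x')) ?_,
    fun h x x' y y' => ?_⟩
  · linear_combination h x x' y y'
  · linear_combination c x * c x' * h x x' y y'

variable [Fintype ι] [Fintype κ]

/-- Independence of the row and column variables of a table `b` that need not be normalised:
`b(x,y) · b(+,+) = b(x,+) · b(+,y)`. -/
def IndepTable [CommSemiring R] (b : ι → κ → R) : Prop :=
  ∀ x y, b x y * ∑ x', ∑ y', b x' y' = (∑ y', b x y') * ∑ x', b x' y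

theorem MinorsVanish.indepTable [CommSemiring R] {b : ι → κ → R} (h : MinorsVanish b) :
    IndepTable b := by
  intro x y
  simp only [mul_sum, sum_mul]
  exact sum_congr rfl fun x' _ => sum_congr rfl fun y' _ => by rw [h x x' y y']

theorem IndepTable.minorsVanish [CommRing R] [IsDomain R] {b : ι → κ → R} (h : IndepTable b)
    (hS : ∑ x, ∑ y, b x y ≠ 0) : MinorsVanish b := by
  intro x x' y y'
  set S := ∑ x, ∑ y, b x y
  -- both sides times `S ^ 2` equal `b(x,+) · b(+,y) · b(x',+) · b(+,y')`
  refine mul_right_cancel₀ (pow_ne_zero 2 hS) ?_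
  linear_combination (b x' y' * S) * h x y + ((∑ y', b x y') * ∑ x, b x y) * h x' y'
    - (b x' y * S) * h x y' - ((∑ y', b x y') * ∑ x, b x y') * h x' y

theorem indepTable_iff_minorsVanish [CommRing R] [IsDomain R] {b : ι → κ → R}
    (hS : ∑ x, ∑ y, b x y ≠ 0) : IndepTable b ↔ MinorsVanish b :=
  ⟨fun h => h.minorsVanish hS, MinorsVanish.indepTable⟩

theorem IndepTable.sum_eq_div_mul [Field R] {b : ι → κ → R} (h : IndepTable b) {y : κ}
    (hy : ∑ x', b x' y ≠ 0) (x : ι) :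
    ∑ y', b x y' = (∑ x', ∑ y', b x' y') / (∑ x', b x' y) * b x y := by
  rw [div_mul_eq_mul_div, eq_div_iff hy, mul_comm _ (b x y), h x y]

end ContingencyTable

theorem linearIndependent_pair_iff_exists_mul_ne {n K : Type*} [Field K] {u v : n → K} :
    LinearIndependent K ![u, v] ↔ ∃ i j, u i * v j ≠ u j * v i := by
  rw [LinearIndependent.pair_iff]
  constructor
  · intro h
    by_contra! hmin
    by_cases hv : v = 0
    · simpa using h 0 1 (by simp [hv])
    obtain ⟨j, hj⟩ := Function.ne_iff.mp hv
    refine hj (h (v j) (-u j) (funext fun i => ?_)).1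
    simp only [Pi.add_apply, Pi.smul_apply, smul_eq_mul, Pi.zero_apply]
    linear_combination hmin i j
  · rintro ⟨i, j, hij⟩ s t hst
    have hi := congr_fun hst i
    have hj := congr_fun hst j
    simp only [Pi.add_apply, Pi.smul_apply, smul_eq_mul, Pi.zero_apply] at hi hj
    constructor
    · refine (mul_eq_zero.mp ?_).resolve_right (sub_ne_zero.mpr hij)
      linear_combination v j * hi - v i * hj
    · refine (mul_eq_zero.mp ?_).resolve_right (sub_ne_zero.mpr hij)
      linear_combination u i * hj - u j * hi

theorem Matrix.rank_eq_two_iff_not_minorsVanish {n K : Type*} [Fintype n] [Field K]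
    (A : Matrix (Fin 2) n K) : A.rank = 2 ↔ ¬ MinorsVanish A := by
  have hrow : A.row = ![A 0, A 1] := by
    ext i : 1; fin_cases i <;> rfl
  have hli : A.rank = 2 ↔ LinearIndependent K A.row := by
    rw [linearIndependent_iff_card_eq_finrank_span, A.rank_eq_finrank_span_row, Set.finrank,
      Fintype.card_fin, eq_comm]
  rw [hli, hrow, linearIndependent_pair_iff_exists_mul_ne]
  simp only [MinorsVanish, Fin.forall_fin_two]
  refine ⟨fun ⟨i, j, hij⟩ h => hij (h.1.2 i j), fun h => ?_⟩
  by_contra! h01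
  exact h ⟨⟨fun _ _ => mul_comm _ _, h01⟩, fun y y' => by linear_combination h01 y' y,
    fun _ _ => mul_comm _ _⟩

theorem mechanism2_rank_condition_binaryX_general (K : ℕ) (hK : 1 ≤ K)
    (p : Fin 2 → Fin 2 → Fin K → Fin 2 → ℝ)
    (hp_nonneg : ∀ t x y m, 0 ≤ p t x y m)
    -- missing mechanism 2: p(t,x,y,m)·p(t,x,+,+) = p(t,x,y,+)·p(t,x,+,m)
    (hp_mech : ∀ t x y m,
      p t x y m * (∑ y', ∑ m', p t x y' m') = (∑ m', p t x y m') * (∑ y', p t x y' m))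
    -- observable positivity
    (hp_pos : ∀ t x y, 0 < p t x y 0)
    (t : Fin 2) :
    -- (i) ↔ (ii)  and  (ii) ↔ (iii)
    (((Matrix.of (fun x y => p t x y 0) : Matrix (Fin 2) (Fin K) ℝ).rank = 2 ↔
      ¬ (∀ x y, (∑ m, p t x y m) * (∑ x', ∑ y', ∑ m, p t x' y' m)
          = (∑ y', ∑ m, p t x y' m) * (∑ x', ∑ m, p t x' y m))) ∧
    ((¬ (∀ x y, (∑ m, p t x y m) * (∑ x', ∑ y', ∑ m, p t x' y' m)
          = (∑ y', ∑ m, p t x y' m) * (∑ x', ∑ m, p t x' y m))) ↔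
      ¬ (∀ x y, p t x y 0 * (∑ x', ∑ y', p t x' y' 0)
          = (∑ y', p t x y' 0) * (∑ x', p t x' y 0)))) := by
  have : NeZero K := ⟨by omega⟩
  let a : Fin 2 → Fin K → ℝ := fun x y => p t x y 0
  let P : Fin 2 → Fin K → ℝ := fun x y => ∑ m, p t x y m
  have hsum_pos {b : Fin K → ℝ} (hb : ∀ y, 0 < b y) : 0 < ∑ y, b y :=
    Finset.sum_pos (fun y _ => hb y) univ_nonempty
  have hP_pos (x y) : 0 < P x y := by
    simpa [P, Fin.sum_univ_two] using
      add_pos_of_pos_of_nonneg (hp_pos t x y) (hp_nonneg t x y 1)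
  have total_ne_zero {b : Fin 2 → Fin K → ℝ} (hb : ∀ x y, 0 < b x y) :
      ∑ x, ∑ y, b x y ≠ 0 :=
    (Finset.sum_pos (fun x _ => hsum_pos (hb x)) univ_nonempty).ne'
  have hPa : P = fun x y => ((∑ y', P x y') / ∑ y', a x y') * a x y :=
    funext₂ fun x => IndepTable.sum_eq_div_mul (hp_mech t x) (y := 0) (hsum_pos (hp_pos t x)).ne'
  have hP : IndepTable P ↔ MinorsVanish a := by
    rw [indepTable_iff_minorsVanish (total_ne_zero hP_pos), hPa, minorsVanish_mul_left_iff
      fun x => (div_pos (hsum_pos (hP_pos x)) (hsum_pos (hp_pos t x))).ne']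
  have ha : IndepTable a ↔ MinorsVanish a :=
    indepTable_iff_minorsVanish (total_ne_zero (hp_pos t))
  have hrank := (Matrix.of a).rank_eq_two_iff_not_minorsVanish
  exact ⟨hrank.trans (not_congr hP).symm, not_congr (hP.trans ha.symm)⟩

/-- For binary X under missing mechanism 2, for each t the rank-2 condition on
Θ_t is equivalent to X ⫫̸ Y | (T=t), which is equivalent to the testable condition
X ⫫̸ Y | (T=t, M=0). -/
theorem mechanism2_rank_condition_binaryX (K : ℕ) (hK : 1 ≤ K)
    (p : Fin 2 → Fin 2 → Fin K → Fin 2 → ℝ)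
    (hp_nonneg : ∀ t x y m, 0 ≤ p t x y m)
    (hp_sum : ∑ t, ∑ x, ∑ y, ∑ m, p t x y m = 1)
    -- missing mechanism 2: p(t,x,y,m)·p(t,x,+,+) = p(t,x,y,+)·p(t,x,+,m)
    (hp_mech : ∀ t x y m,
      p t x y m * (∑ y', ∑ m', p t x y' m') = (∑ m', p t x y m') * (∑ y', p t x y' m))
    -- observable positivity
    (hp_pos : ∀ t x y, 0 < p t x y 0)
    (t : Fin 2) :
    -- (i) ↔ (ii)  and  (ii) ↔ (iii)
    (((Matrix.of (fun x y => p t x y 0) : Matrix (Fin 2) (Fin K) ℝ).rank = 2 ↔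
      ¬ (∀ x y, (∑ m, p t x y m) * (∑ x', ∑ y', ∑ m, p t x' y' m)
          = (∑ y', ∑ m, p t x y' m) * (∑ x', ∑ m, p t x' y m))) ∧
    ((¬ (∀ x y, (∑ m, p t x y m) * (∑ x', ∑ y', ∑ m, p t x' y' m)
          = (∑ y', ∑ m, p t x y' m) * (∑ x', ∑ m, p t x' y m))) ↔
      ¬ (∀ x y, p t x y 0 * (∑ x', ∑ y', p t x' y' 0)
          = (∑ y', p t x y' 0) * (∑ x', p t x' y 0)))) :=
  mechanism2_rank_condition_binaryX_general K hK p hp_nonneg hp_mech hp_pos t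
end

section
/- Let Y be binary (K = 2), J ≥ 1, and let p be a joint distribution of (T,X,Y,M) satisfying missing mechanism 3 that is observably positive. Then for every x, the causal odds ratio equals an observed quantity: p(1,x,1,+)·p(0,x,0,+)·p(0,x,1,0)·p(1,x,0,0) = p(0,x,1,+)·p(1,x,0,+)·p(1,x,1,0)·p(0,x,0,0); equivalently, [P_p(Y=1|T=1,X=x)·P_p(Y=0|T=0,X=x)] / [P_p(Y=1|T=0,X=x)·P_p(Y=0|T=1,X=x)] = [p(1,x,1,0)·p(0,x,0,0)] / [p(0,x,1,0)·p(1,x,0,0)]. -/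
/-- For binary Y under missing mechanism 3 (M ⫫ T | (X,Y)), the causal odds
ratio within each subgroup X = x equals the observed odds ratio computed on the M = 0 cells. -/
theorem mechanism3_COR_identifiable (J : ℕ) (hJ : 1 ≤ J)
    (p : Fin 2 → Fin J → Fin 2 → Fin 2 → ℝ)
    (hp_nonneg : ∀ t x y m, 0 ≤ p t x y m)
    (hp_sum : ∑ t, ∑ x, ∑ y, ∑ m, p t x y m = 1)
    -- missing mechanism 3: p(t,x,y,m)·p(+,x,y,+) = p(t,x,y,+)·p(+,x,y,m)
    (hp_mech : ∀ t x y m,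
      p t x y m * (∑ t', ∑ m', p t' x y m') = (∑ m', p t x y m') * (∑ t', p t' x y m))
    -- observable positivity
    (hp_pos : ∀ t x y, 0 < p t x y 0) :
    ∀ x,
      -- product form
      ((∑ m, p 1 x 1 m) * (∑ m, p 0 x 0 m) * (p 0 x 1 0) * (p 1 x 0 0)
        = (∑ m, p 0 x 1 m) * (∑ m, p 1 x 0 m) * (p 1 x 1 0) * (p 0 x 0 0)) ∧
      -- ratio form: COR_x = observed odds ratio on the M = 0 cells
      ((((∑ m, p 1 x 1 m) / (∑ y, ∑ m, p 1 x y m)) * ((∑ m, p 0 x 0 m) / (∑ y, ∑ m, p 0 x y m)))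
          / (((∑ m, p 0 x 1 m) / (∑ y, ∑ m, p 0 x y m)) * ((∑ m, p 1 x 0 m) / (∑ y, ∑ m, p 1 x y m)))
        = (p 1 x 1 0 * p 0 x 0 0) / (p 0 x 1 0 * p 1 x 0 0)) := by
  intro x
  have hQ : ∀ y : Fin 2, 0 < ∑ t', p t' x y 0 := by
    intro y
    rw [Fin.sum_univ_two]
    exact add_pos (hp_pos 0 x y) (hp_pos 1 x y)
  have hPeq : ∀ (t y : Fin 2),
      (∑ m', p t x y m') = p t x y 0 * (∑ t', ∑ m', p t' x y m') / (∑ t', p t' x y 0) := by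
    intro t y
    rw [eq_div_iff (hQ y).ne']
    linarith [hp_mech t x y 0]
  have hP : ∀ t y : Fin 2, 0 < ∑ m', p t x y m' := by
    intro t y
    rw [Fin.sum_univ_two]
    linarith [hp_pos t x y, hp_nonneg t x y 1]
  have h1 : (∑ m, p 1 x 1 m) * (∑ m, p 0 x 0 m) * (p 0 x 1 0) * (p 1 x 0 0)
      = (∑ m, p 0 x 1 m) * (∑ m, p 1 x 0 m) * (p 1 x 1 0) * (p 0 x 0 0) := by
    rw [hPeq 1 1, hPeq 0 0, hPeq 0 1, hPeq 1 0]
    field_simp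
  refine ⟨h1, ?_⟩
  have hD : ∀ t : Fin 2, 0 < ∑ y, ∑ m, p t x y m := by
    intro t
    rw [Fin.sum_univ_two]
    have := hP t 0; have := hP t 1; linarith
  have step : (((∑ m, p 1 x 1 m) / (∑ y, ∑ m, p 1 x y m)) * ((∑ m, p 0 x 0 m) / (∑ y, ∑ m, p 0 x y m)))
      / (((∑ m, p 0 x 1 m) / (∑ y, ∑ m, p 0 x y m)) * ((∑ m, p 1 x 0 m) / (∑ y, ∑ m, p 1 x y m)))
      = ((∑ m, p 1 x 1 m) * (∑ m, p 0 x 0 m)) / ((∑ m, p 0 x 1 m) * (∑ m, p 1 x 0 m)) := by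
    have h01 := (hP 0 1).ne'
    have h10 := (hP 1 0).ne'
    have hD0 := (hD 0).ne'
    have hD1 := (hD 1).ne'
    generalize hA : (∑ m, p 1 x 1 m) = A at *
    generalize hB : (∑ m, p 0 x 0 m) = B at *
    generalize hC : (∑ m, p 0 x 1 m) = C at *
    generalize hE : (∑ m, p 1 x 0 m) = E at *
    generalize hF : (∑ y, ∑ m, p 1 x y m) = F at *
    generalize hG : (∑ y, ∑ m, p 0 x y m) = G at *
    field_simp
  rw [step, div_eq_div_iff (mul_pos (hP 0 1) (hP 1 0)).ne'
    (mul_pos (hp_pos 0 x 1) (hp_pos 1 x 0)).ne']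
  linarith [h1]
end

section
/- Let Y be binary (K = 2), J ≥ 1, and let p and q be two joint distributions of (T,X,Y,M) that both satisfy missing mechanism 3 and are both observably positive. If p(t,x,y,0) = q(t,x,y,0) for all (t,x,y), then for every x the signs of the subgroup causal risk differences agree: P_p(Y=1|T=1,X=x) − P_p(Y=1|T=0,X=x) and P_q(Y=1|T=1,X=x) − P_q(Y=1|T=0,X=x) are either both positive, both zero, or both negative. -/
lemma mech3_key {J : ℕ} (p : Fin 2 → Fin J → Fin 2 → Fin 2 → ℝ)
    (hnn : ∀ t x y m, 0 ≤ p t x y m)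
    (hmech : ∀ t x y m,
      p t x y m * (∑ t', ∑ m', p t' x y m') = (∑ m', p t x y m') * (∑ t', p t' x y m))
    (hpos : ∀ t x y, 0 < p t x y 0) (x : Fin J) :
    ∃ c : ℝ, 0 < c ∧
      (∑ m, p 1 x 1 m) / (∑ y, ∑ m, p 1 x y m) - (∑ m, p 0 x 1 m) / (∑ y, ∑ m, p 0 x y m)
        = c * (p 1 x 1 0 * p 0 x 0 0 - p 0 x 1 0 * p 1 x 0 0) := by
  have e11 := hmech 1 x 1 0
  have e01 := hmech 0 x 1 0
  have e10 := hmech 1 x 0 0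
  have e00 := hmech 0 x 0 0
  simp only [Fin.sum_univ_two] at e11 e01 e10 e00 ⊢
  set b11 := p 1 x 1 0; set b01 := p 0 x 1 0; set b10 := p 1 x 0 0; set b00 := p 0 x 0 0
  set A11 := p 1 x 1 0 + p 1 x 1 1 with hA11
  set A01 := p 0 x 1 0 + p 0 x 1 1 with hA01
  set A10 := p 1 x 0 0 + p 1 x 0 1 with hA10
  set A00 := p 0 x 0 0 + p 0 x 0 1 with hA00
  have hA11p : 0 < A11 := by have := hpos 1 x 1; have := hnn 1 x 1 1; linarith
  have hA01p : 0 < A01 := by have := hpos 0 x 1; have := hnn 0 x 1 1; linarith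
  have hA10p : 0 < A10 := by have := hpos 1 x 0; have := hnn 1 x 0 1; linarith
  have hA00p : 0 < A00 := by have := hpos 0 x 0; have := hnn 0 x 0 1; linarith
  have hO1 : (0:ℝ) < b01 + b11 := by have := hpos 0 x 1; have := hpos 1 x 1; positivity
  have hO0 : (0:ℝ) < b00 + b10 := by have := hpos 0 x 0; have := hpos 1 x 0; positivity
  have hS1 : 0 < A01 + A11 := by linarith
  have hS0 : 0 < A00 + A10 := by linarith
  have hd1 : 0 < A10 + A11 := by linarith
  have hd0 : 0 < A00 + A01 := by linarith
  refine ⟨(A01 + A11) * (A00 + A10) / ((b01 + b11) * (b00 + b10) * (A10 + A11) * (A00 + A01)),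
    by positivity, ?_⟩
  -- mech equations: b * S = A * O
  have m11 : b11 * (A01 + A11) = A11 * (b01 + b11) := by linarith [e11]
  have m01 : b01 * (A01 + A11) = A01 * (b01 + b11) := by linarith [e01]
  have m10 : b10 * (A00 + A10) = A10 * (b00 + b10) := by linarith [e10]
  have m00 : b00 * (A00 + A10) = A00 * (b00 + b10) := by linarith [e00]
  have hkey : (A11*A00 - A01*A10)*((b01+b11)*(b00+b10))
      = (A01+A11)*(A00+A10)*(b11*b00 - b01*b10) := by
    linear_combination (-(A00*(b00+b10)))*m11 + (-(b11*(A01+A11)))*m00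
      + (A10*(b00+b10))*m01 + (b01*(A01+A11))*m10
  rw [div_sub_div _ _ hd1.ne' hd0.ne', div_mul_eq_mul_div,
    div_eq_div_iff (by positivity) (by positivity : ((b01+b11)*(b00+b10)*(A10+A11)*(A00+A01)) ≠ 0)]
  linear_combination ((A10+A11)*(A00+A01)) * hkey



/-- For binary Y under missing mechanism 3, the signs of the subgroup causal
risk differences are identified by the fully observed cells. -/
theorem mechanism3_sign_identifiable (J : ℕ) (hJ : 1 ≤ J)
    (p q : Fin 2 → Fin J → Fin 2 → Fin 2 → ℝ)
    (hp_nonneg : ∀ t x y m, 0 ≤ p t x y m)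
    (hp_sum : ∑ t, ∑ x, ∑ y, ∑ m, p t x y m = 1)
    (hq_nonneg : ∀ t x y m, 0 ≤ q t x y m)
    (hq_sum : ∑ t, ∑ x, ∑ y, ∑ m, q t x y m = 1)
    -- missing mechanism 3: p(t,x,y,m)·p(+,x,y,+) = p(t,x,y,+)·p(+,x,y,m)
    (hp_mech : ∀ t x y m,
      p t x y m * (∑ t', ∑ m', p t' x y m') = (∑ m', p t x y m') * (∑ t', p t' x y m))
    (hq_mech : ∀ t x y m,
      q t x y m * (∑ t', ∑ m', q t' x y m') = (∑ m', q t x y m') * (∑ t', q t' x y m))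
    -- observable positivity
    (hp_pos : ∀ t x y, 0 < p t x y 0)
    (hq_pos : ∀ t x y, 0 < q t x y 0)
    -- same fully observed cells
    (hobs0 : ∀ t x y, p t x y 0 = q t x y 0) :
    ∀ x,
      let dp := (∑ m, p 1 x 1 m) / (∑ y, ∑ m, p 1 x y m)
                  - (∑ m, p 0 x 1 m) / (∑ y, ∑ m, p 0 x y m)
      let dq := (∑ m, q 1 x 1 m) / (∑ y, ∑ m, q 1 x y m)
                  - (∑ m, q 0 x 1 m) / (∑ y, ∑ m, q 0 x y m)
      (0 < dp ↔ 0 < dq) ∧ (dp = 0 ↔ dq = 0) ∧ (dp < 0 ↔ dq < 0) := by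
  intro x
  obtain ⟨cp, hcp, hp⟩ := mech3_key p hp_nonneg hp_mech hp_pos x
  obtain ⟨cq, hcq, hq⟩ := mech3_key q hq_nonneg hq_mech hq_pos x
  rw [hobs0 1 x 1, hobs0 0 x 0, hobs0 0 x 1, hobs0 1 x 0] at hp
  dsimp only
  rw [hp, hq]
  set D := q 1 x 1 0 * q 0 x 0 0 - q 0 x 1 0 * q 1 x 0 0 with hD
  refine ⟨⟨fun h => ?_, fun h => ?_⟩, ⟨fun h => ?_, fun h => ?_⟩, ⟨fun h => ?_, fun h => ?_⟩⟩
  · exact mul_pos hcq (by nlinarith)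
  · exact mul_pos hcp (by nlinarith)
  · rcases mul_eq_zero.mp h with h' | h'; · exact absurd h' hcp.ne'
    rw [h', mul_zero]
  · rcases mul_eq_zero.mp h with h' | h'; · exact absurd h' hcq.ne'
    rw [h', mul_zero]
  · have : D < 0 := by nlinarith
    exact mul_neg_of_pos_of_neg hcq this
  · have : D < 0 := by nlinarith
    exact mul_neg_of_pos_of_neg hcp this
end

section
/- Let Y be binary (K = 2), J ≥ 1, and let p and q be two joint distributions of (T,X,Y,M) that both satisfy missing mechanism 3, are both observably positive, both satisfy the randomization condition T ⫫ X (p(t,x,+,+) = p(t,+,+,+)·p(+,x,+,+) for all t,x, and likewise for q), and have the same observed data (p(t,x,y,0) = q(t,x,y,0) for all (t,x,y) and p(t,+,y,1) = q(t,+,y,1) for all (t,y)). Then for every function D : ℝ → ℝ → ℝ satisfying, for all a,b ∈ ℝ, D(a,b) > 0 ⟺ a > b, D(a,b) < 0 ⟺ a < b, and D(a,b) = 0 ⟺ a = b, and for every x, one has D(P_p(Y=1|T=1,X=x), P_p(Y=1|T=0,X=x)) = D(P_q(Y=1|T=1,X=x), P_q(Y=1|T=0,X=x)); that is, the subgroup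 causal effects are identified. -/
private lemma key_factor {J : ℕ} (p : Fin 2 → Fin J → Fin 2 → Fin 2 → ℝ)
    (hp_mech : ∀ t x y m,
      p t x y m * (∑ t', ∑ m', p t' x y m') = (∑ m', p t x y m') * (∑ t', p t' x y m))
    (hp_pos : ∀ t x y, 0 < p t x y 0) (t : Fin 2) (x : Fin J) (y : Fin 2) :
    (∑ m, p t x y m)
      = p t x y 0 * ((∑ t', ∑ m', p t' x y m') / (∑ t', p t' x y 0)) := by
  have hb : 0 < ∑ t', p t' x y 0 := by
    rw [Fin.sum_univ_two]; exact add_pos (hp_pos 0 x y) (hp_pos 1 x y)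
  have h := hp_mech t x y 0
  rw [mul_div_assoc', eq_div_iff hb.ne']
  linarith [h]

/-- For binary Y under missing mechanism 3 with complete randomization
(T ⫫ X), the subgroup causal effects D[P(Y=1|T=1,X=x), P(Y=1|T=0,X=x)] are identified
by the observed data, for every sign-respecting causal measure D. -/
theorem mechanism3_CE_identifiable_randomized (J : ℕ) (hJ : 1 ≤ J)
    (p q : Fin 2 → Fin J → Fin 2 → Fin 2 → ℝ)
    (hp_nonneg : ∀ t x y m, 0 ≤ p t x y m)
    (hp_sum : ∑ t, ∑ x, ∑ y, ∑ m, p t x y m = 1)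
    (hq_nonneg : ∀ t x y m, 0 ≤ q t x y m)
    (hq_sum : ∑ t, ∑ x, ∑ y, ∑ m, q t x y m = 1)
    -- missing mechanism 3: p(t,x,y,m)·p(+,x,y,+) = p(t,x,y,+)·p(+,x,y,m)
    (hp_mech : ∀ t x y m,
      p t x y m * (∑ t', ∑ m', p t' x y m') = (∑ m', p t x y m') * (∑ t', p t' x y m))
    (hq_mech : ∀ t x y m,
      q t x y m * (∑ t', ∑ m', q t' x y m') = (∑ m', q t x y m') * (∑ t', q t' x y m))
    -- observable positivity
    (hp_pos : ∀ t x y, 0 < p t x y 0)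
    (hq_pos : ∀ t x y, 0 < q t x y 0)
    -- randomization: T ⫫ X, i.e. p(t,x,+,+) = p(t,+,+,+)·p(+,x,+,+)
    (hp_rand : ∀ t x, (∑ y, ∑ m, p t x y m)
      = (∑ x', ∑ y, ∑ m, p t x' y m) * (∑ t', ∑ y, ∑ m, p t' x y m))
    (hq_rand : ∀ t x, (∑ y, ∑ m, q t x y m)
      = (∑ x', ∑ y, ∑ m, q t x' y m) * (∑ t', ∑ y, ∑ m, q t' x y m))
    -- same observed data
    (hobs0 : ∀ t x y, p t x y 0 = q t x y 0)
    (hobs1 : ∀ t y, ∑ x, p t x y 1 = ∑ x, q t x y 1) :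
    ∀ (D : ℝ → ℝ → ℝ),
      (∀ a b, (0 < D a b ↔ b < a) ∧ (D a b < 0 ↔ a < b) ∧ (D a b = 0 ↔ a = b)) →
      ∀ x,
        D ((∑ m, p 1 x 1 m) / (∑ y, ∑ m, p 1 x y m))
          ((∑ m, p 0 x 1 m) / (∑ y, ∑ m, p 0 x y m))
        = D ((∑ m, q 1 x 1 m) / (∑ y, ∑ m, q 1 x y m))
            ((∑ m, q 0 x 1 m) / (∑ y, ∑ m, q 0 x y m)) := by
  intro D hD x
  -- shorthand for the "selection factors"
  set sp : Fin 2 → ℝ :=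
    fun y => (∑ t', ∑ m', p t' x y m') / (∑ t', p t' x y 0) with hsp
  set sq : Fin 2 → ℝ :=
    fun y => (∑ t', ∑ m', q t' x y m') / (∑ t', q t' x y 0) with hsq
  have hkeyp : ∀ t y, (∑ m, p t x y m) = p t x y 0 * sp y :=
    fun t y => key_factor p hp_mech hp_pos t x y
  have hkeyq : ∀ t y, (∑ m, q t x y m) = q t x y 0 * sq y :=
    fun t y => key_factor q hq_mech hq_pos t x y
  have hsp_pos : ∀ y, 0 < sp y := by
    intro y
    apply div_pos
    · rw [Fin.sum_univ_two, Fin.sum_univ_two, Fin.sum_univ_two]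
      have := hp_nonneg 0 x y 1; have := hp_nonneg 1 x y 1
      have := hp_pos 0 x y; have := hp_pos 1 x y
      linarith
    · rw [Fin.sum_univ_two]; exact add_pos (hp_pos 0 x y) (hp_pos 1 x y)
  have hsq_pos : ∀ y, 0 < sq y := by
    intro y
    apply div_pos
    · rw [Fin.sum_univ_two, Fin.sum_univ_two, Fin.sum_univ_two]
      have := hq_nonneg 0 x y 1; have := hq_nonneg 1 x y 1
      have := hq_pos 0 x y; have := hq_pos 1 x y
      linarith
    · rw [Fin.sum_univ_two]; exact add_pos (hq_pos 0 x y) (hq_pos 1 x y)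
  clear_value sp sq
  clear hsp hsq
  -- the treatment-arm total masses agree between p and q (from the observed data)
  have hPP : ∀ t : Fin 2,
      (∑ x', ∑ y, ∑ m, p t x' y m) = (∑ x', ∑ y, ∑ m, q t x' y m) := by
    intro t
    have hsplit : ∀ (r : Fin 2 → Fin J → Fin 2 → Fin 2 → ℝ),
        (∑ x', ∑ y, ∑ m, r t x' y m)
          = ((∑ x', r t x' 0 0) + (∑ x', r t x' 0 1))
            + ((∑ x', r t x' 1 0) + (∑ x', r t x' 1 1)) := by
      intro r
      simp only [Fin.sum_univ_two, Finset.sum_add_distrib]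
      ring
    rw [hsplit p, hsplit q]
    have e00 : (∑ x', p t x' 0 0) = ∑ x', q t x' 0 0 :=
      Finset.sum_congr rfl fun x' _ => hobs0 t x' 0
    have e10 : (∑ x', p t x' 1 0) = ∑ x', q t x' 1 0 :=
      Finset.sum_congr rfl fun x' _ => hobs0 t x' 1
    rw [e00, e10, hobs1 t 0, hobs1 t 1]
  -- arm totals are positive
  have hPpos : ∀ t : Fin 2, 0 < (∑ x', ∑ y, ∑ m, p t x' y m) := by
    intro t
    apply Finset.sum_pos'
    · intro i _
      apply Finset.sum_nonneg
      intro y _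
      exact Finset.sum_nonneg fun m _ => hp_nonneg t i y m
    · refine ⟨x, Finset.mem_univ x, ?_⟩
      rw [Fin.sum_univ_two, Fin.sum_univ_two, Fin.sum_univ_two]
      have := hp_nonneg t x 0 1; have := hp_nonneg t x 1 0; have := hp_nonneg t x 1 1
      have := hp_pos t x 0
      linarith
  -- expand the denominators
  have hexp_p : ∀ t : Fin 2,
      (∑ y, ∑ m, p t x y m) = p t x 0 0 * sp 0 + p t x 1 0 * sp 1 := by
    intro t; rw [Fin.sum_univ_two, hkeyp t 0, hkeyp t 1]
  have hexp_q : ∀ t : Fin 2,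
      (∑ y, ∑ m, q t x y m) = q t x 0 0 * sq 0 + q t x 1 0 * sq 1 := by
    intro t; rw [Fin.sum_univ_two, hkeyq t 0, hkeyq t 1]
  -- randomization cross-equation, for p and for q
  have hrandp : (∑ x', ∑ y, ∑ m, p 0 x' y m) * (∑ y, ∑ m, p 1 x y m)
      = (∑ x', ∑ y, ∑ m, p 1 x' y m) * (∑ y, ∑ m, p 0 x y m) := by
    rw [hp_rand 0 x, hp_rand 1 x]; ring
  have hrandq : (∑ x', ∑ y, ∑ m, q 0 x' y m) * (∑ y, ∑ m, q 1 x y m)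
      = (∑ x', ∑ y, ∑ m, q 1 x' y m) * (∑ y, ∑ m, q 0 x y m) := by
    rw [hq_rand 0 x, hq_rand 1 x]; ring
  set A0 : ℝ := ∑ x', ∑ y, ∑ m, p 0 x' y m with hA0
  set A1 : ℝ := ∑ x', ∑ y, ∑ m, p 1 x' y m with hA1
  have hA0pos : 0 < A0 := hPpos 0
  have hA1pos : 0 < A1 := hPpos 1
  -- the linear relations α·s(0) = β·s(1) for p and q with identical α, β
  have hmainp : (A0 * p 1 x 0 0 - A1 * p 0 x 0 0) * sp 0
      = (A1 * p 0 x 1 0 - A0 * p 1 x 1 0) * sp 1 := by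
    have h := hrandp
    rw [hexp_p 0, hexp_p 1] at h
    linarith [h]
  have hmainq : (A0 * p 1 x 0 0 - A1 * p 0 x 0 0) * sq 0
      = (A1 * p 0 x 1 0 - A0 * p 1 x 1 0) * sq 1 := by
    have h := hrandq
    rw [hexp_q 0, hexp_q 1] at h
    rw [← hPP 0, ← hPP 1, ← hobs0 0 x 0, ← hobs0 0 x 1,
      ← hobs0 1 x 0, ← hobs0 1 x 1] at h
    linarith [h]
  -- rewrite the goal
  rw [hkeyp 1 1, hkeyp 0 1, hexp_p 1, hexp_p 0,
    hkeyq 1 1, hkeyq 0 1, hexp_q 1, hexp_q 0,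
    ← hobs0 0 x 0, ← hobs0 0 x 1, ← hobs0 1 x 0, ← hobs0 1 x 1]
  have hdenp : ∀ t : Fin 2, 0 < p t x 0 0 * sp 0 + p t x 1 0 * sp 1 := by
    intro t
    exact add_pos (mul_pos (hp_pos t x 0) (hsp_pos 0))
      (mul_pos (hp_pos t x 1) (hsp_pos 1))
  have hdenq : ∀ t : Fin 2, 0 < p t x 0 0 * sq 0 + p t x 1 0 * sq 1 := by
    intro t
    exact add_pos (mul_pos (hp_pos t x 0) (hsq_pos 0))
      (mul_pos (hp_pos t x 1) (hsq_pos 1))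
  by_cases hβ : (A1 * p 0 x 1 0 - A0 * p 1 x 1 0) = 0
  · -- degenerate case: both contrasts are zero
    have hα : (A0 * p 1 x 0 0 - A1 * p 0 x 0 0) = 0 := by
      have h := hmainp
      rw [hβ, zero_mul] at h
      exact (mul_eq_zero.mp h).resolve_right (ne_of_gt (hsp_pos 0))
    have hdet : p 1 x 0 0 * p 0 x 1 0 = p 0 x 0 0 * p 1 x 1 0 := by
      have h1 : A0 * p 1 x 0 0 = A1 * p 0 x 0 0 := by linarith
      have h2 : A1 * p 0 x 1 0 = A0 * p 1 x 1 0 := by linarith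
      have : (A0 * A1) * (p 1 x 0 0 * p 0 x 1 0) = (A0 * A1) * (p 0 x 0 0 * p 1 x 1 0) := by
        linear_combination (A1 * p 0 x 1 0) * h1 + (A1 * p 0 x 0 0) * h2
      exact mul_left_cancel₀ (ne_of_gt (mul_pos hA0pos hA1pos)) this
    have e1 : p 1 x 1 0 * sp 1 / (p 1 x 0 0 * sp 0 + p 1 x 1 0 * sp 1)
        = p 0 x 1 0 * sp 1 / (p 0 x 0 0 * sp 0 + p 0 x 1 0 * sp 1) := by
      rw [div_eq_div_iff (hdenp 1).ne' (hdenp 0).ne']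
      linear_combination (-(sp 0 * sp 1)) * hdet
    have e2 : p 1 x 1 0 * sq 1 / (p 1 x 0 0 * sq 0 + p 1 x 1 0 * sq 1)
        = p 0 x 1 0 * sq 1 / (p 0 x 0 0 * sq 0 + p 0 x 1 0 * sq 1) := by
      rw [div_eq_div_iff (hdenq 1).ne' (hdenq 0).ne']
      linear_combination (-(sq 0 * sq 1)) * hdet
    rw [((hD _ _).2.2).mpr e1, ((hD _ _).2.2).mpr e2]
  · -- nondegenerate case: the conditional probabilities are identified
    have hcross : sp 1 * sq 0 = sq 1 * sp 0 := by
      have h : (A1 * p 0 x 1 0 - A0 * p 1 x 1 0) * (sp 1 * sq 0)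
          = (A1 * p 0 x 1 0 - A0 * p 1 x 1 0) * (sq 1 * sp 0) := by
        linear_combination sp 0 * hmainq - sq 0 * hmainp
      exact mul_left_cancel₀ hβ h
    congr 1
    · rw [div_eq_div_iff (hdenp 1).ne' (hdenq 1).ne']
      linear_combination (p 1 x 1 0 * p 1 x 0 0) * hcross
    · rw [div_eq_div_iff (hdenp 0).ne' (hdenq 0).ne']
      linear_combination (p 0 x 1 0 * p 0 x 0 0) * hcross
end

section
/- Let X be binary (J = 2), K ≥ 1, and let p and q be two joint distributions of (T,X,Y,M) that both satisfy missing mechanism 3, are both observably positive, and have the same observed data (p(t,x,y,0) = q(t,x,y,0) for all (t,x,y) and p(t,+,y,1) = q(t,+,y,1) for all (t,y)). Suppose moreover that for every y ∈ {0,…,K−1}, X and T are conditionally dependent under p given Y = y, i.e. p(1,0,y,+)·p(0,1,y,+) ≠ p(1,1,y,+)·p(0,0,y,+). Then p = q. -/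
/-- For binary X under missing mechanism 3, if X and T are conditionally
dependent given Y = y for every y, the whole joint distribution is identified by the
observed data. -/
theorem mechanism3_joint_identifiable (K : ℕ) (hK : 1 ≤ K)
    (p q : Fin 2 → Fin 2 → Fin K → Fin 2 → ℝ)
    (hp_nonneg : ∀ t x y m, 0 ≤ p t x y m)
    (hp_sum : ∑ t, ∑ x, ∑ y, ∑ m, p t x y m = 1)
    (hq_nonneg : ∀ t x y m, 0 ≤ q t x y m)
    (hq_sum : ∑ t, ∑ x, ∑ y, ∑ m, q t x y m = 1)
    -- missing mechanism 3: p(t,x,y,m)·p(+,x,y,+) = p(t,x,y,+)·p(+,x,y,m)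
    (hp_mech : ∀ t x y m,
      p t x y m * (∑ t', ∑ m', p t' x y m') = (∑ m', p t x y m') * (∑ t', p t' x y m))
    (hq_mech : ∀ t x y m,
      q t x y m * (∑ t', ∑ m', q t' x y m') = (∑ m', q t x y m') * (∑ t', q t' x y m))
    -- observable positivity
    (hp_pos : ∀ t x y, 0 < p t x y 0)
    (hq_pos : ∀ t x y, 0 < q t x y 0)
    -- same observed data
    (hobs0 : ∀ t x y, p t x y 0 = q t x y 0)
    (hobs1 : ∀ t y, ∑ x, p t x y 1 = ∑ x, q t x y 1)
    -- X ⫫̸ T | (Y = y) under p, for every y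
    (hdep : ∀ y, (∑ m, p 1 0 y m) * (∑ m, p 0 1 y m) ≠ (∑ m, p 1 1 y m) * (∑ m, p 0 0 y m)) :
    p = q := by
  -- key consequence of mechanism 3: p(t,x,y,1)·p(+,x,y,0) = p(t,x,y,0)·p(+,x,y,1)
  have keyp : ∀ t x (y : Fin K),
      p t x y 1 * (p 0 x y 0 + p 1 x y 0) = p t x y 0 * (p 0 x y 1 + p 1 x y 1) := by
    intro t x y
    have h := hp_mech t x y 1
    simp only [Fin.sum_univ_two] at h
    linear_combination h
  have keyq : ∀ t x (y : Fin K),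
      q t x y 1 * (q 0 x y 0 + q 1 x y 0) = q t x y 0 * (q 0 x y 1 + q 1 x y 1) := by
    intro t x y
    have h := hq_mech t x y 1
    simp only [Fin.sum_univ_two] at h
    linear_combination h
  have hpden : ∀ x (y : Fin K), 0 < p 0 x y 0 + p 1 x y 0 :=
    fun x y => add_pos (hp_pos 0 x y) (hp_pos 1 x y)
  have hqden : ∀ x (y : Fin K), 0 < q 0 x y 0 + q 1 x y 0 :=
    fun x y => add_pos (hq_pos 0 x y) (hq_pos 1 x y)
  obtain ⟨r, hr_nonneg, hpr⟩ : ∃ r : Fin 2 → Fin K → ℝ,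
      (∀ x y, 0 ≤ r x y) ∧ ∀ t x y, p t x y 1 = p t x y 0 * r x y := by
    refine ⟨fun x y => (p 0 x y 1 + p 1 x y 1) / (p 0 x y 0 + p 1 x y 0), ?_, ?_⟩
    · intro x y
      exact div_nonneg (add_nonneg (hp_nonneg 0 x y 1) (hp_nonneg 1 x y 1)) (le_of_lt (hpden x y))
    · intro t x y
      show p t x y 1 = p t x y 0 * ((p 0 x y 1 + p 1 x y 1) / (p 0 x y 0 + p 1 x y 0))
      rw [← mul_div_assoc, eq_div_iff (ne_of_gt (hpden x y))]
      linear_combination keyp t x y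
  obtain ⟨s, hs_nonneg, hqs⟩ : ∃ s : Fin 2 → Fin K → ℝ,
      (∀ x y, 0 ≤ s x y) ∧ ∀ t x y, q t x y 1 = q t x y 0 * s x y := by
    refine ⟨fun x y => (q 0 x y 1 + q 1 x y 1) / (q 0 x y 0 + q 1 x y 0), ?_, ?_⟩
    · intro x y
      exact div_nonneg (add_nonneg (hq_nonneg 0 x y 1) (hq_nonneg 1 x y 1)) (le_of_lt (hqden x y))
    · intro t x y
      show q t x y 1 = q t x y 0 * ((q 0 x y 1 + q 1 x y 1) / (q 0 x y 0 + q 1 x y 0))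
      rw [← mul_div_assoc, eq_div_iff (ne_of_gt (hqden x y))]
      linear_combination keyq t x y
  -- the determinant of the observed table is nonzero
  have hD : ∀ y : Fin K, p 1 0 y 0 * p 0 1 y 0 ≠ p 1 1 y 0 * p 0 0 y 0 := by
    intro y heq
    apply hdep y
    simp only [Fin.sum_univ_two]
    rw [hpr 1 0 y, hpr 0 1 y, hpr 1 1 y, hpr 0 0 y]
    linear_combination ((1 + r 0 y) * (1 + r 1 y)) * heq
  -- r = s, for each y
  have hrs : ∀ x (y : Fin K), r x y = s x y := by
    intro x y
    have e : ∀ t : Fin 2, p t 0 y 0 * r 0 y + p t 1 y 0 * r 1 y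
        = p t 0 y 0 * s 0 y + p t 1 y 0 * s 1 y := by
      intro t
      have h := hobs1 t y
      simp only [Fin.sum_univ_two] at h
      rw [hpr t 0 y, hpr t 1 y, hqs t 0 y, hqs t 1 y, ← hobs0 t 0 y, ← hobs0 t 1 y] at h
      exact h
    have e0 := e 0
    have e1 := e 1
    have hDu : (p 1 0 y 0 * p 0 1 y 0 - p 1 1 y 0 * p 0 0 y 0) * (r 0 y - s 0 y) = 0 := by
      linear_combination p 0 1 y 0 * e1 - p 1 1 y 0 * e0
    have hDne : p 1 0 y 0 * p 0 1 y 0 - p 1 1 y 0 * p 0 0 y 0 ≠ 0 :=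
      sub_ne_zero_of_ne (hD y)
    have hu : r 0 y = s 0 y := by
      rcases mul_eq_zero.mp hDu with h | h
      · exact absurd h hDne
      · linarith
    have hv : r 1 y = s 1 y := by
      have h01 : p 0 1 y 0 * (r 1 y - s 1 y) = 0 := by
        linear_combination e0 - p 0 0 y 0 * hu
      rcases mul_eq_zero.mp h01 with h | h
      · exact absurd h (ne_of_gt (hp_pos 0 1 y))
      · linarith
    fin_cases x
    · exact hu
    · exact hv
  funext t x y m
  fin_cases m
  · exact hobs0 t x y
  · show p t x y 1 = q t x y 1
    rw [hpr t x y, hqs t x y, hobs0 t x y, hrs x y]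
end

section
/- Let X be binary (J = 2), K ≥ 1, and let p be a joint distribution of (T,X,Y,M) satisfying missing mechanism 3 that is observably positive. Then for each y ∈ {0,…,K−1}: p(1,0,y,+)·p(0,1,y,+) = p(1,1,y,+)·p(0,0,y,+) if and only if p(1,0,y,0)·p(0,1,y,0) = p(1,1,y,0)·p(0,0,y,0); that is, the condition X ⫫̸ T | (Y=y) is equivalent to the testable condition X ⫫̸ T | (Y=y, M=0). -/
/-- For binary X under missing mechanism 3, conditional independence of X and T
given Y = y is equivalent to the testable conditional independence given (Y = y, M = 0). -/
theorem mechanism3_testable_condition (K : ℕ) (hK : 1 ≤ K)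
    (p : Fin 2 → Fin 2 → Fin K → Fin 2 → ℝ)
    (hp_nonneg : ∀ t x y m, 0 ≤ p t x y m)
    (hp_sum : ∑ t, ∑ x, ∑ y, ∑ m, p t x y m = 1)
    -- missing mechanism 3: p(t,x,y,m)·p(+,x,y,+) = p(t,x,y,+)·p(+,x,y,m)
    (hp_mech : ∀ t x y m,
      p t x y m * (∑ t', ∑ m', p t' x y m') = (∑ m', p t x y m') * (∑ t', p t' x y m))
    -- observable positivity
    (hp_pos : ∀ t x y, 0 < p t x y 0) :
    ∀ y, ((∑ m, p 1 0 y m) * (∑ m, p 0 1 y m) = (∑ m, p 1 1 y m) * (∑ m, p 0 0 y m)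
      ↔ p 1 0 y 0 * p 0 1 y 0 = p 1 1 y 0 * p 0 0 y 0) := by
  intro y
  set u : Fin 2 → ℝ := fun x => ∑ t', ∑ m', p t' x y m' with hu
  set v : Fin 2 → ℝ := fun x => ∑ t', p t' x y 0 with hv
  have hvpos : ∀ x, 0 < v x := by
    intro x
    have : v x = p 0 x y 0 + p 1 x y 0 := by simp [hv, Fin.sum_univ_two]
    rw [this]; exact add_pos (hp_pos 0 x y) (hp_pos 1 x y)
  have hupos : ∀ x, 0 < u x := by
    intro x
    have hle : v x ≤ u x := by
      apply Finset.sum_le_sum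
      intro t' _
      have : p t' x y 0 = ∑ m' ∈ ({0} : Finset (Fin 2)), p t' x y m' := by simp
      rw [this]
      exact Finset.sum_le_sum_of_subset_of_nonneg (by simp) (fun m _ _ => hp_nonneg t' x y m)
    linarith [hvpos x]
  have key : ∀ t x, p t x y 0 * u x = (∑ m, p t x y m) * v x := by
    intro t x
    exact hp_mech t x y 0
  have h10 := key 1 0
  have h01 := key 0 1
  have h11 := key 1 1
  have h00 := key 0 0
  constructor
  · intro h
    have hmul : (p 1 0 y 0 * p 0 1 y 0) * (u 0 * u 1)
        = (p 1 1 y 0 * p 0 0 y 0) * (u 0 * u 1) := by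
      calc (p 1 0 y 0 * p 0 1 y 0) * (u 0 * u 1)
          = (p 1 0 y 0 * u 0) * (p 0 1 y 0 * u 1) := by ring
        _ = ((∑ m, p 1 0 y m) * v 0) * ((∑ m, p 0 1 y m) * v 1) := by rw [h10, h01]
        _ = ((∑ m, p 1 0 y m) * (∑ m, p 0 1 y m)) * (v 0 * v 1) := by ring
        _ = ((∑ m, p 1 1 y m) * (∑ m, p 0 0 y m)) * (v 0 * v 1) := by rw [h]
        _ = ((∑ m, p 1 1 y m) * v 1) * ((∑ m, p 0 0 y m) * v 0) := by ring
        _ = (p 1 1 y 0 * u 1) * (p 0 0 y 0 * u 0) := by rw [h11, h00]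
        _ = (p 1 1 y 0 * p 0 0 y 0) * (u 0 * u 1) := by ring
    exact mul_right_cancel₀ (mul_pos (hupos 0) (hupos 1)).ne' hmul
  · intro h
    have hmul : ((∑ m, p 1 0 y m) * (∑ m, p 0 1 y m)) * (v 0 * v 1)
        = ((∑ m, p 1 1 y m) * (∑ m, p 0 0 y m)) * (v 0 * v 1) := by
      calc ((∑ m, p 1 0 y m) * (∑ m, p 0 1 y m)) * (v 0 * v 1)
          = ((∑ m, p 1 0 y m) * v 0) * ((∑ m, p 0 1 y m) * v 1) := by ring
        _ = (p 1 0 y 0 * u 0) * (p 0 1 y 0 * u 1) := by rw [h10, h01]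
        _ = (p 1 0 y 0 * p 0 1 y 0) * (u 0 * u 1) := by ring
        _ = (p 1 1 y 0 * p 0 0 y 0) * (u 0 * u 1) := by rw [h]
        _ = (p 1 1 y 0 * u 1) * (p 0 0 y 0 * u 0) := by ring
        _ = ((∑ m, p 1 1 y m) * v 1) * ((∑ m, p 0 0 y m) * v 0) := by rw [h11, h00]
        _ = ((∑ m, p 1 1 y m) * (∑ m, p 0 0 y m)) * (v 0 * v 1) := by ring
    exact mul_right_cancel₀ (mul_pos (hvpos 0) (hvpos 1)).ne' hmul
end

section
/- Let J, K ≥ 1 and let p and q be two joint distributions of (T,X,Y,M) that both satisfy the mechanism M ⫫ (T,Y) | X, are both observably positive, and have the same observed data (p(t,x,y,0) = q(t,x,y,0) for all (t,x,y) and p(t,+,y,1) = q(t,+,y,1) for all (t,y)). Suppose the J × (2K) real matrix whose (x,(t,y)) entry is p(t,x,y,0) (rows indexed by x, columns indexed by pairs (t,y)) has rank J. Then p = q. -/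
/-- Corollary 1, first part: Under the mechanism M ⫫ (T,Y) | X, if the
J × 2K matrix stacking Θ_1 and Θ_0 has rank J, then the joint distribution is identified
by the observed data. -/
theorem mechanismMX_joint_identifiable (J K : ℕ) (hJ : 1 ≤ J) (hK : 1 ≤ K)
    (p q : Fin 2 → Fin J → Fin K → Fin 2 → ℝ)
    (hp_nonneg : ∀ t x y m, 0 ≤ p t x y m)
    (hp_sum : ∑ t, ∑ x, ∑ y, ∑ m, p t x y m = 1)
    (hq_nonneg : ∀ t x y m, 0 ≤ q t x y m)
    (hq_sum : ∑ t, ∑ x, ∑ y, ∑ m, q t x y m = 1)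
    -- mechanism M ⫫ (T,Y) | X: p(t,x,y,m)·p(+,x,+,+) = p(t,x,y,+)·p(+,x,+,m)
    (hp_mech : ∀ t x y m,
      p t x y m * (∑ t', ∑ y', ∑ m', p t' x y' m')
        = (∑ m', p t x y m') * (∑ t', ∑ y', p t' x y' m))
    (hq_mech : ∀ t x y m,
      q t x y m * (∑ t', ∑ y', ∑ m', q t' x y' m')
        = (∑ m', q t x y m') * (∑ t', ∑ y', q t' x y' m))
    -- observable positivity
    (hp_pos : ∀ t x y, 0 < p t x y 0)
    (hq_pos : ∀ t x y, 0 < q t x y 0)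
    -- same observed data
    (hobs0 : ∀ t x y, p t x y 0 = q t x y 0)
    (hobs1 : ∀ t y, ∑ x, p t x y 1 = ∑ x, q t x y 1)
    -- rank condition: the J × (2K) matrix with (x,(t,y)) entry p(t,x,y,0) has rank J
    (hrank : (Matrix.of (fun x (ty : Fin 2 × Fin K) => p ty.1 x ty.2 0) :
        Matrix (Fin J) (Fin 2 × Fin K) ℝ).rank = J) :
    p = q := by
  classical
  haveI : NeZero K := ⟨Nat.one_le_iff_ne_zero.mp hK⟩
  have hBpos : ∀ x : Fin J, 0 < ∑ t, ∑ y, p t x y 0 := by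
    intro x
    refine Finset.sum_pos (fun t _ => Finset.sum_pos (fun y _ => hp_pos t x y) ?_) ?_ <;>
      exact Finset.univ_nonempty
  have hBq : ∀ x : Fin J, (∑ t, ∑ y, q t x y 0) = ∑ t, ∑ y, p t x y 0 := by
    intro x; simp [hobs0]
  have hp1 : ∀ t x y, p t x y 1 * (∑ t', ∑ y', p t' x y' 0)
      = p t x y 0 * (∑ t', ∑ y', p t' x y' 1) := by
    intro t x y
    have h := hp_mech t x y 1
    have hA : (∑ t', ∑ y', ∑ m', p t' x y' m')
        = (∑ t', ∑ y', p t' x y' 0) + (∑ t', ∑ y', p t' x y' 1) := by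
      simp [Fin.sum_univ_two, Finset.sum_add_distrib]
    have hm : (∑ m', p t x y m') = p t x y 0 + p t x y 1 := Fin.sum_univ_two _
    rw [hA, hm] at h
    linear_combination h
  have hq1 : ∀ t x y, q t x y 1 * (∑ t', ∑ y', p t' x y' 0)
      = p t x y 0 * (∑ t', ∑ y', q t' x y' 1) := by
    intro t x y
    have h := hq_mech t x y 1
    have hA : (∑ t', ∑ y', ∑ m', q t' x y' m')
        = (∑ t', ∑ y', q t' x y' 0) + (∑ t', ∑ y', q t' x y' 1) := by
      simp [Fin.sum_univ_two, Finset.sum_add_distrib]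
    have hm : (∑ m', q t x y m') = q t x y 0 + q t x y 1 := Fin.sum_univ_two _
    rw [hA, hm, hBq x] at h
    rw [hobs0 t x y]
    linear_combination h
  -- the difference vector
  set v : Fin J → ℝ := fun x =>
    ((∑ t', ∑ y', p t' x y' 1) - (∑ t', ∑ y', q t' x y' 1)) / (∑ t', ∑ y', p t' x y' 0)
    with hv
  have key : ∀ t x y, p t x y 0 * v x = p t x y 1 - q t x y 1 := by
    intro t x y
    rw [hv]
    rw [mul_div_assoc', div_eq_iff (hBpos x).ne']
    linear_combination hq1 t x y - hp1 t x y
  -- kernel argument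
  set M : Matrix (Fin 2 × Fin K) (Fin J) ℝ :=
    (Matrix.of (fun x (ty : Fin 2 × Fin K) => p ty.1 x ty.2 0) :
        Matrix (Fin J) (Fin 2 × Fin K) ℝ).transpose with hM
  have hrankM : M.rank = J := by rw [hM, Matrix.rank_transpose, hrank]
  have hkernel : v = 0 := by
    have hMv : M.mulVec v = 0 := by
      funext ty
      obtain ⟨t, y⟩ := ty
      have h0 : ∑ x, p t x y 0 * v x = 0 := by
        have : ∑ x, p t x y 0 * v x = (∑ x, p t x y 1) - ∑ x, q t x y 1 := by
          rw [← Finset.sum_sub_distrib]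
          exact Finset.sum_congr rfl fun x _ => key t x y
        rw [this, hobs1 t y, sub_self]
      simpa [M, Matrix.mulVec, dotProduct] using h0
    have hfr : Module.finrank ℝ (LinearMap.ker M.mulVecLin) = 0 := by
      have h1 := M.mulVecLin.finrank_range_add_finrank_ker
      rw [Matrix.rank] at hrankM
      simp only [Module.finrank_fintype_fun_eq_card, Fintype.card_fin] at h1
      omega
    have hbot : LinearMap.ker M.mulVecLin = ⊥ := Submodule.finrank_eq_zero.mp hfr
    have hv' : v ∈ LinearMap.ker M.mulVecLin := by
      simpa [Matrix.mulVecLin] using hMv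
    rw [hbot] at hv'
    simpa using hv'
  funext t x y m
  fin_cases m
  · exact hobs0 t x y
  · show p t x y 1 = q t x y 1
    have := key t x y
    rw [hkernel] at this
    simp only [Pi.zero_apply, mul_zero] at this
    linarith
end

section
/- Let X be binary (J = 2), K ≥ 1, and let p be a joint distribution of (T,X,Y,M) satisfying the mechanism M ⫫ (T,Y) | X that is observably positive. Then the following three conditions are equivalent: (i) the 2 × (2K) real matrix whose (x,(t,y)) entry is p(t,x,y,0) has rank 2; (ii) X ⫫̸ (T,Y), i.e. it is not the case that p(t,x,y,+) = p(+,x,+,+)·p(t,+,y,+) for all (t,x,y); (iii) X ⫫̸ (T,Y) | (M = 0), i.e. it is not the case that p(t,x,y,0)·p(+,+,+,0) = p(+,x,+,0)·p(t,+,y,0) for all (t,x,y). -/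
private lemma aux3 (p0 p1 A0 A1 : ℝ) :
    (p0 * (A0 + A1) = A0 * (p0 + p1) ∧ p1 * (A0 + A1) = A1 * (p0 + p1)) ↔
      p0 * A1 = p1 * A0 := by
  constructor
  · rintro ⟨h0, _⟩; linear_combination h0
  · intro e
    constructor
    · linear_combination e
    · linear_combination -e

private lemma aux2 (p0 p1 q0 q1 A0 A1 S0 S1 : ℝ) (hA0 : A0 ≠ 0) (hA1 : A1 ≠ 0)
    (hS0 : S0 ≠ 0) (hS1 : S1 ≠ 0) (hsum : S0 + S1 = 1)
    (k0 : p0 * S0 = q0 * A0) (k1 : p1 * S1 = q1 * A1) :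
    (q0 = S0 * (q0 + q1) ∧ q1 = S1 * (q0 + q1)) ↔ p0 * A1 = p1 * A0 := by
  constructor
  · rintro ⟨h0, h1⟩
    have e0 : p0 = (q0 + q1) * A0 :=
      mul_right_cancel₀ hS0 (by linear_combination k0 + A0 * h0)
    have e1 : p1 = (q0 + q1) * A1 :=
      mul_right_cancel₀ hS1 (by linear_combination k1 + A1 * h1)
    linear_combination A1 * e0 - A0 * e1
  · intro e
    have hq : q0 * S1 = S0 * q1 := by
      apply mul_right_cancel₀ (mul_ne_zero hA0 hA1)
      linear_combination (-S1 * A1) * k0 + (S0 * A0) * k1 + (S0 * S1) * e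
    constructor
    · linear_combination hq - q0 * hsum
    · linear_combination (-1 : ℝ) * hq - q1 * hsum

/-- Corollary 1, second part: For binary X under the mechanism
M ⫫ (T,Y) | X, the rank-2 condition on the stacked matrix is equivalent to X ⫫̸ (T,Y),
which is equivalent to the testable condition X ⫫̸ (T,Y) | (M = 0). -/
theorem mechanismMX_rank_condition_binaryX (K : ℕ) (hK : 1 ≤ K)
    (p : Fin 2 → Fin 2 → Fin K → Fin 2 → ℝ)
    (hp_nonneg : ∀ t x y m, 0 ≤ p t x y m)
    (hp_sum : ∑ t, ∑ x, ∑ y, ∑ m, p t x y m = 1)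
    -- mechanism M ⫫ (T,Y) | X: p(t,x,y,m)·p(+,x,+,+) = p(t,x,y,+)·p(+,x,+,m)
    (hp_mech : ∀ t x y m,
      p t x y m * (∑ t', ∑ y', ∑ m', p t' x y' m')
        = (∑ m', p t x y m') * (∑ t', ∑ y', p t' x y' m))
    -- observable positivity
    (hp_pos : ∀ t x y, 0 < p t x y 0) :
    -- (i) ↔ (ii)  and  (ii) ↔ (iii)
    (((Matrix.of (fun x (ty : Fin 2 × Fin K) => p ty.1 x ty.2 0) :
        Matrix (Fin 2) (Fin 2 × Fin K) ℝ).rank = 2 ↔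
      ¬ (∀ t x y, (∑ m, p t x y m)
          = (∑ t', ∑ y', ∑ m, p t' x y' m) * (∑ x', ∑ m, p t x' y m))) ∧
    ((¬ (∀ t x y, (∑ m, p t x y m)
          = (∑ t', ∑ y', ∑ m, p t' x y' m) * (∑ x', ∑ m, p t x' y m))) ↔
      ¬ (∀ t x y, p t x y 0 * (∑ t', ∑ x', ∑ y', p t' x' y' 0)
          = (∑ t', ∑ y', p t' x y' 0) * (∑ x', p t x' y 0)))) := by
  haveI : Nonempty (Fin K) := ⟨⟨0, hK⟩⟩
  have ha : ∀ x, (0:ℝ) < ∑ t', ∑ y', p t' x y' 0 := fun x =>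
    Finset.sum_pos (fun t _ => Finset.sum_pos (fun y _ => hp_pos t x y)
      Finset.univ_nonempty) Finset.univ_nonempty
  have hS : ∀ x, (0:ℝ) < ∑ t', ∑ y', ∑ m', p t' x y' m' := fun x =>
    Finset.sum_pos (fun t _ => Finset.sum_pos (fun y _ =>
      Finset.sum_pos' (fun m _ => hp_nonneg t x y m)
        ⟨0, Finset.mem_univ _, hp_pos t x y⟩) Finset.univ_nonempty)
      Finset.univ_nonempty
  have key : ∀ t x y, p t x y 0 * (∑ t', ∑ y', ∑ m', p t' x y' m')
      = (∑ m', p t x y m') * (∑ t', ∑ y', p t' x y' 0) := fun t x y => hp_mech t x y 0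
  have hsum1 : (∑ t', ∑ y', ∑ m', p t' 0 y' m') + (∑ t', ∑ y', ∑ m', p t' 1 y' m') = 1 := by
    rw [← Fin.sum_univ_two (f := fun x => ∑ t', ∑ y', ∑ m', p t' x y' m'), Finset.sum_comm]
    exact hp_sum
  -- the pivot condition E
  have h2 : (∀ t x y, (∑ m, p t x y m)
        = (∑ t', ∑ y', ∑ m, p t' x y' m) * (∑ x', ∑ m, p t x' y m)) ↔
      (∀ t y, p t 0 y 0 * (∑ t', ∑ y', p t' 1 y' 0)
        = p t 1 y 0 * (∑ t', ∑ y', p t' 0 y' 0)) := by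
    constructor
    · intro h t y
      have h0 := h t 0 y
      have h1 := h t 1 y
      rw [Fin.sum_univ_two (f := fun x' => ∑ m, p t x' y m)] at h0 h1
      exact (aux2 (p t 0 y 0) (p t 1 y 0) (∑ m, p t 0 y m) (∑ m, p t 1 y m)
        (∑ t', ∑ y', p t' 0 y' 0) (∑ t', ∑ y', p t' 1 y' 0)
        (∑ t', ∑ y', ∑ m', p t' 0 y' m') (∑ t', ∑ y', ∑ m', p t' 1 y' m')
        (ha 0).ne' (ha 1).ne' (hS 0).ne' (hS 1).ne' hsum1 (key t 0 y) (key t 1 y)).mp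
        ⟨h0, h1⟩
    · intro hE t x y
      rw [Fin.sum_univ_two (f := fun x' => ∑ m, p t x' y m)]
      have := (aux2 (p t 0 y 0) (p t 1 y 0) (∑ m, p t 0 y m) (∑ m, p t 1 y m)
        (∑ t', ∑ y', p t' 0 y' 0) (∑ t', ∑ y', p t' 1 y' 0)
        (∑ t', ∑ y', ∑ m', p t' 0 y' m') (∑ t', ∑ y', ∑ m', p t' 1 y' m')
        (ha 0).ne' (ha 1).ne' (hS 0).ne' (hS 1).ne' hsum1 (key t 0 y) (key t 1 y)).mpr
        (hE t y)
      fin_cases x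
      · exact this.1
      · exact this.2
  have hZ : (∑ t', ∑ x', ∑ y', p t' x' y' 0)
      = (∑ t', ∑ y', p t' 0 y' 0) + (∑ t', ∑ y', p t' 1 y' 0) := by
    rw [← Fin.sum_univ_two (f := fun x => ∑ t', ∑ y', p t' x y' 0), Finset.sum_comm]
  have h3 : (∀ t x y, p t x y 0 * (∑ t', ∑ x', ∑ y', p t' x' y' 0)
        = (∑ t', ∑ y', p t' x y' 0) * (∑ x', p t x' y 0)) ↔
      (∀ t y, p t 0 y 0 * (∑ t', ∑ y', p t' 1 y' 0)
        = p t 1 y 0 * (∑ t', ∑ y', p t' 0 y' 0)) := by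
    constructor
    · intro h t y
      have h0 := h t 0 y
      rw [hZ, Fin.sum_univ_two (f := fun x' => p t x' y 0)] at h0
      exact (aux3 (p t 0 y 0) (p t 1 y 0) (∑ t', ∑ y', p t' 0 y' 0)
        (∑ t', ∑ y', p t' 1 y' 0)).mp ⟨h0, by
          have h1 := h t 1 y
          rw [hZ, Fin.sum_univ_two (f := fun x' => p t x' y 0)] at h1
          exact h1⟩
    · intro hE t x y
      rw [hZ, Fin.sum_univ_two (f := fun x' => p t x' y 0)]
      have := (aux3 (p t 0 y 0) (p t 1 y 0) (∑ t', ∑ y', p t' 0 y' 0)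
        (∑ t', ∑ y', p t' 1 y' 0)).mpr (hE t y)
      fin_cases x
      · exact this.1
      · exact this.2
  -- rank condition
  have h1 : ((Matrix.of (fun x (ty : Fin 2 × Fin K) => p ty.1 x ty.2 0) :
        Matrix (Fin 2) (Fin 2 × Fin K) ℝ).rank = 2) ↔
      ¬ (∀ t y, p t 0 y 0 * (∑ t', ∑ y', p t' 1 y' 0)
        = p t 1 y 0 * (∑ t', ∑ y', p t' 0 y' 0)) := by
    set A : Matrix (Fin 2) (Fin 2 × Fin K) ℝ :=
      Matrix.of (fun x (ty : Fin 2 × Fin K) => p ty.1 x ty.2 0) with hAdef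
    constructor
    · intro hr hE
      -- A factors through a rank-1 matrix
      set B : Matrix (Fin 2) (Fin 1) ℝ :=
        Matrix.of (fun x (_ : Fin 1) => ∑ t', ∑ y', p t' x y' 0) with hBdef
      set C : Matrix (Fin 1) (Fin 2 × Fin K) ℝ :=
        Matrix.of (fun (_ : Fin 1) ty => p ty.1 0 ty.2 0 / (∑ t', ∑ y', p t' 0 y' 0))
        with hCdef
      have hA : A = B * C := by
        ext x ty
        simp only [hAdef, hBdef, hCdef, Matrix.mul_apply, Fin.sum_univ_one, Matrix.of_apply]
        rw [show (∑ t', ∑ y', p t' x y' 0) * (p ty.1 0 ty.2 0 / (∑ t', ∑ y', p t' 0 y' 0))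
            = ((∑ t', ∑ y', p t' x y' 0) * p ty.1 0 ty.2 0) / (∑ t', ∑ y', p t' 0 y' 0)
          from (mul_div_assoc _ _ _).symm, eq_div_iff (ha 0).ne']
        fin_cases x <;> simp only [Fin.zero_eta, Fin.mk_one]
        · ring
        · linear_combination -hE ty.1 ty.2
      have hle : A.rank ≤ 1 := by
        rw [hA]
        calc (B * C).rank ≤ C.rank := Matrix.rank_mul_le_right B C
          _ ≤ 1 := by simpa using C.rank_le_card_height
      omega
    · intro hE
      push_neg at hE
      obtain ⟨t, y, hty⟩ := hE
      have hne : (∑ t', ∑ y', (p t 0 y 0 * p t' 1 y' 0 - p t 1 y 0 * p t' 0 y' 0)) ≠ 0 := by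
        have heq : (∑ t', ∑ y', (p t 0 y 0 * p t' 1 y' 0 - p t 1 y 0 * p t' 0 y' 0))
            = p t 0 y 0 * (∑ t', ∑ y', p t' 1 y' 0)
              - p t 1 y 0 * (∑ t', ∑ y', p t' 0 y' 0) := by
          simp only [Finset.mul_sum, ← Finset.sum_sub_distrib]
        rw [heq]
        exact sub_ne_zero.mpr hty
      obtain ⟨t', _, ht'⟩ := Finset.exists_ne_zero_of_sum_ne_zero hne
      obtain ⟨y', _, hd⟩ := Finset.exists_ne_zero_of_sum_ne_zero ht'
      set P : Matrix (Fin 2 × Fin K) (Fin 2) ℝ :=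
        Matrix.of (fun j i => if j = (![(t, y), (t', y')] i) then (1:ℝ) else 0) with hPdef
      have hdet : (A * P).det ≠ 0 := by
        have hAP : ∀ x i, (A * P) x i = p (![(t, y), (t', y')] i).1 x (![(t, y), (t', y')] i).2 0 := by
          intro x i
          simp [hAdef, hPdef, Matrix.mul_apply, mul_ite]
        rw [Matrix.det_fin_two, hAP, hAP, hAP, hAP]
        simp only [Matrix.cons_val_zero, Matrix.cons_val_one, Matrix.head_cons]
        intro hc
        apply hd
        linear_combination hc
      have hu : IsUnit (A * P) := (Matrix.isUnit_iff_isUnit_det _).mpr (isUnit_iff_ne_zero.mpr hdet)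
      have h2' : (A * P).rank = 2 := by
        simpa using Matrix.rank_of_isUnit _ hu
      have hge : 2 ≤ A.rank := h2'.symm.trans_le (Matrix.rank_mul_le_left A P)
      have hle : A.rank ≤ 2 := by simpa using A.rank_le_card_height
      omega
  exact ⟨h1.trans (not_congr h2).symm, (not_congr h2).trans (not_congr h3).symm⟩
end

section
/- Let X and Y be binary (J = K = 2) and let p and q be two joint distributions of (T,X,Y,M) that both satisfy missing mechanism 4 (logistic), have all cells strictly positive (p(t,x,y,m) > 0 and q(t,x,y,m) > 0 for all cells), and have the same observed data (p(t,x,y,0) = q(t,x,y,0) for all (t,x,y) and p(t,+,y,1) = q(t,+,y,1) for all (t,y)). Define OR_{YT|M=1}(p) = [p(1,+,1,1)·p(0,+,0,1)] / [p(1,+,0,1)·p(0,+,1,1)] and, for x ∈ {0,1}, OR_{YT|X=x,M=0}(p) = [p(1,x,1,0)·p(0,x,0,0)] / [p(1,x,0,0)·p(0,x,1,0)]. If OR_{YT|M=1}(p) lies strictly between OR_{YT|X=1,M=0}(p) and OR_{YT|X=0,M=0}(p), then p = q. -/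
set_option maxHeartbeats 1000000

private lemma quad_root_unique {L C P0 d e : ℝ} (hd : 0 < d) (he : 0 < e)
    (h1 : L * d ^ 2 + C * d + P0 = 0) (h2 : L * e ^ 2 + C * e + P0 = 0)
    (hs : P0 * L < 0) : d = e := by
  by_contra hne
  have h3 : (d - e) * (L * (d + e) + C) = 0 := by linear_combination h1 - h2
  have h4 : L * (d + e) + C = 0 := by
    rcases mul_eq_zero.mp h3 with h | h
    · exact absurd (sub_eq_zero.mp h) hne
    · exact h
  have h5 : P0 = L * (d * e) := by linear_combination h1 - d * h4
  have h6 : P0 * L = L * L * (d * e) := by rw [h5]; ring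
  have h7 : 0 ≤ L * L * (d * e) := mul_nonneg (mul_self_nonneg L) (mul_pos hd he).le
  rw [h6] at hs
  linarith

/-- Theorem 4: For binary X and Y under the logistic missing mechanism 4,
if the odds ratio OR_{YT|M=1} lies strictly between OR_{YT|X=1,M=0} and OR_{YT|X=0,M=0},
then the joint distribution is identified by the observed data. -/
theorem mechanism4_joint_identifiable
    (p q : Fin 2 → Fin 2 → Fin 2 → Fin 2 → ℝ)
    (hp_pos : ∀ t x y m, 0 < p t x y m)
    (hp_sum : ∑ t, ∑ x, ∑ y, ∑ m, p t x y m = 1)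
    (hq_pos : ∀ t x y m, 0 < q t x y m)
    (hq_sum : ∑ t, ∑ x, ∑ y, ∑ m, q t x y m = 1)
    -- logistic missing mechanism 4 for p
    (hp_mech : ∃ b0 bT bX bY : ℝ, ∀ t x y : Fin 2,
      p t x y 1 = Real.exp (b0 + bT * ((t : ℕ) : ℝ) + bX * ((x : ℕ) : ℝ)
        + bY * ((y : ℕ) : ℝ)) * p t x y 0)
    -- logistic missing mechanism 4 for q
    (hq_mech : ∃ b0 bT bX bY : ℝ, ∀ t x y : Fin 2,
      q t x y 1 = Real.exp (b0 + bT * ((t : ℕ) : ℝ) + bX * ((x : ℕ) : ℝ)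
        + bY * ((y : ℕ) : ℝ)) * q t x y 0)
    -- same observed data
    (hobs0 : ∀ t x y, p t x y 0 = q t x y 0)
    (hobs1 : ∀ t y, ∑ x, p t x y 1 = ∑ x, q t x y 1)
    -- the odds ratios
    (ORm OR1 OR0 : ℝ)
    (hORm : ORm = ((∑ x, p 1 x 1 1) * (∑ x, p 0 x 0 1))
      / ((∑ x, p 1 x 0 1) * (∑ x, p 0 x 1 1)))
    (hOR1 : OR1 = (p 1 1 1 0 * p 0 1 0 0) / (p 1 1 0 0 * p 0 1 1 0))
    (hOR0 : OR0 = (p 1 0 1 0 * p 0 0 0 0) / (p 1 0 0 0 * p 0 0 1 0))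
    -- OR_{YT|M=1} lies strictly between OR_{YT|X=1,M=0} and OR_{YT|X=0,M=0}
    (hbetween : min OR1 OR0 < ORm ∧ ORm < max OR1 OR0) :
    p = q := by
  obtain ⟨b0, bT, bX, bY, hpm⟩ := hp_mech
  obtain ⟨c0, cT, cX, cY, hqm⟩ := hq_mech
  -- the sixteen cell equations with simplified exponentials
  have P000 : p 0 0 0 1 = Real.exp b0 * p 0 0 0 0 := by
    have h := hpm 0 0 0; norm_num [Real.exp_add] at h; linear_combination h
  have P100 : p 1 0 0 1 = Real.exp b0 * Real.exp bT * p 1 0 0 0 := by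
    have h := hpm 1 0 0; norm_num [Real.exp_add] at h; linear_combination h
  have P010 : p 0 1 0 1 = Real.exp b0 * Real.exp bX * p 0 1 0 0 := by
    have h := hpm 0 1 0; norm_num [Real.exp_add] at h; linear_combination h
  have P001 : p 0 0 1 1 = Real.exp b0 * Real.exp bY * p 0 0 1 0 := by
    have h := hpm 0 0 1; norm_num [Real.exp_add] at h; linear_combination h
  have P110 : p 1 1 0 1 = Real.exp b0 * Real.exp bT * Real.exp bX * p 1 1 0 0 := by
    have h := hpm 1 1 0; norm_num [Real.exp_add] at h; linear_combination h
  have P101 : p 1 0 1 1 = Real.exp b0 * Real.exp bT * Real.exp bY * p 1 0 1 0 := by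
    have h := hpm 1 0 1; norm_num [Real.exp_add] at h; linear_combination h
  have P011 : p 0 1 1 1 = Real.exp b0 * Real.exp bX * Real.exp bY * p 0 1 1 0 := by
    have h := hpm 0 1 1; norm_num [Real.exp_add] at h; linear_combination h
  have P111 : p 1 1 1 1 = Real.exp b0 * Real.exp bT * Real.exp bX * Real.exp bY * p 1 1 1 0 := by
    have h := hpm 1 1 1; norm_num [Real.exp_add] at h; linear_combination h
  have Q000 : q 0 0 0 1 = Real.exp c0 * q 0 0 0 0 := by
    have h := hqm 0 0 0; norm_num [Real.exp_add] at h; linear_combination h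
  have Q100 : q 1 0 0 1 = Real.exp c0 * Real.exp cT * q 1 0 0 0 := by
    have h := hqm 1 0 0; norm_num [Real.exp_add] at h; linear_combination h
  have Q010 : q 0 1 0 1 = Real.exp c0 * Real.exp cX * q 0 1 0 0 := by
    have h := hqm 0 1 0; norm_num [Real.exp_add] at h; linear_combination h
  have Q001 : q 0 0 1 1 = Real.exp c0 * Real.exp cY * q 0 0 1 0 := by
    have h := hqm 0 0 1; norm_num [Real.exp_add] at h; linear_combination h
  have Q110 : q 1 1 0 1 = Real.exp c0 * Real.exp cT * Real.exp cX * q 1 1 0 0 := by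
    have h := hqm 1 1 0; norm_num [Real.exp_add] at h; linear_combination h
  have Q101 : q 1 0 1 1 = Real.exp c0 * Real.exp cT * Real.exp cY * q 1 0 1 0 := by
    have h := hqm 1 0 1; norm_num [Real.exp_add] at h; linear_combination h
  have Q011 : q 0 1 1 1 = Real.exp c0 * Real.exp cX * Real.exp cY * q 0 1 1 0 := by
    have h := hqm 0 1 1; norm_num [Real.exp_add] at h; linear_combination h
  have Q111 : q 1 1 1 1 = Real.exp c0 * Real.exp cT * Real.exp cX * Real.exp cY * q 1 1 1 0 := by
    have h := hqm 1 1 1; norm_num [Real.exp_add] at h; linear_combination h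
  -- observed marginal equations
  have o00 : Real.exp b0 * (p 0 0 0 0 + Real.exp bX * p 0 1 0 0)
      = Real.exp c0 * (p 0 0 0 0 + Real.exp cX * p 0 1 0 0) := by
    have h := hobs1 0 0
    rw [Fin.sum_univ_two, Fin.sum_univ_two, P000, P010, Q000, Q010,
      ← hobs0 0 0 0, ← hobs0 0 1 0] at h
    linear_combination h
  have o10 : Real.exp b0 * Real.exp bT * (p 1 0 0 0 + Real.exp bX * p 1 1 0 0)
      = Real.exp c0 * Real.exp cT * (p 1 0 0 0 + Real.exp cX * p 1 1 0 0) := by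
    have h := hobs1 1 0
    rw [Fin.sum_univ_two, Fin.sum_univ_two, P100, P110, Q100, Q110,
      ← hobs0 1 0 0, ← hobs0 1 1 0] at h
    linear_combination h
  have o01 : Real.exp b0 * Real.exp bY * (p 0 0 1 0 + Real.exp bX * p 0 1 1 0)
      = Real.exp c0 * Real.exp cY * (p 0 0 1 0 + Real.exp cX * p 0 1 1 0) := by
    have h := hobs1 0 1
    rw [Fin.sum_univ_two, Fin.sum_univ_two, P001, P011, Q001, Q011,
      ← hobs0 0 0 1, ← hobs0 0 1 1] at h
    linear_combination h
  -- sums in parametric form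
  have hs11 : (∑ x, p 1 x 1 1)
      = Real.exp b0 * Real.exp bT * Real.exp bY * (p 1 0 1 0 + Real.exp bX * p 1 1 1 0) := by
    rw [Fin.sum_univ_two, P101, P111]; ring
  have hs00 : (∑ x, p 0 x 0 1)
      = Real.exp b0 * (p 0 0 0 0 + Real.exp bX * p 0 1 0 0) := by
    rw [Fin.sum_univ_two, P000, P010]; ring
  have hs10 : (∑ x, p 1 x 0 1)
      = Real.exp b0 * Real.exp bT * (p 1 0 0 0 + Real.exp bX * p 1 1 0 0) := by
    rw [Fin.sum_univ_two, P100, P110]; ring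
  have hs01 : (∑ x, p 0 x 1 1)
      = Real.exp b0 * Real.exp bY * (p 0 0 1 0 + Real.exp bX * p 0 1 1 0) := by
    rw [Fin.sum_univ_two, P001, P011]; ring
  have hsq11 : (∑ x, p 1 x 1 1)
      = Real.exp c0 * Real.exp cT * Real.exp cY * (p 1 0 1 0 + Real.exp cX * p 1 1 1 0) := by
    rw [hobs1 1 1, Fin.sum_univ_two, Q101, Q111, ← hobs0 1 0 1, ← hobs0 1 1 1]; ring
  have hsq00 : (∑ x, p 0 x 0 1)
      = Real.exp c0 * (p 0 0 0 0 + Real.exp cX * p 0 1 0 0) := by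
    rw [hobs1 0 0, Fin.sum_univ_two, Q000, Q010, ← hobs0 0 0 0, ← hobs0 0 1 0]; ring
  have hsq10 : (∑ x, p 1 x 0 1)
      = Real.exp c0 * Real.exp cT * (p 1 0 0 0 + Real.exp cX * p 1 1 0 0) := by
    rw [hobs1 1 0, Fin.sum_univ_two, Q100, Q110, ← hobs0 1 0 0, ← hobs0 1 1 0]; ring
  have hsq01 : (∑ x, p 0 x 1 1)
      = Real.exp c0 * Real.exp cY * (p 0 0 1 0 + Real.exp cX * p 0 1 1 0) := by
    rw [hobs1 0 1, Fin.sum_univ_two, Q001, Q011, ← hobs0 0 0 1, ← hobs0 0 1 1]; ring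
  -- positivity of marginal sums
  have hm10 : 0 < ∑ x, p 1 x 0 1 := by
    rw [Fin.sum_univ_two]; exact add_pos (hp_pos 1 0 0 1) (hp_pos 1 1 0 1)
  have hm01 : 0 < ∑ x, p 0 x 1 1 := by
    rw [Fin.sum_univ_two]; exact add_pos (hp_pos 0 0 1 1) (hp_pos 0 1 1 1)
  rw [eq_div_iff (mul_pos hm10 hm01).ne'] at hORm
  -- the odds-ratio equation for p's parameters
  have key_p : (p 1 0 1 0 + Real.exp bX * p 1 1 1 0) * (p 0 0 0 0 + Real.exp bX * p 0 1 0 0)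
      = ORm * ((p 1 0 0 0 + Real.exp bX * p 1 1 0 0) * (p 0 0 1 0 + Real.exp bX * p 0 1 1 0)) := by
    have h := hORm
    rw [hs10, hs01, hs11, hs00] at h
    have hc : (Real.exp b0 * Real.exp b0 * Real.exp bT * Real.exp bY) *
        ((p 1 0 1 0 + Real.exp bX * p 1 1 1 0) * (p 0 0 0 0 + Real.exp bX * p 0 1 0 0))
        = (Real.exp b0 * Real.exp b0 * Real.exp bT * Real.exp bY) *
        (ORm * ((p 1 0 0 0 + Real.exp bX * p 1 1 0 0) * (p 0 0 1 0 + Real.exp bX * p 0 1 1 0))) := by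
      linear_combination -h
    exact mul_left_cancel₀ (by positivity) hc
  -- the odds-ratio equation for q's parameters
  have key_q : (p 1 0 1 0 + Real.exp cX * p 1 1 1 0) * (p 0 0 0 0 + Real.exp cX * p 0 1 0 0)
      = ORm * ((p 1 0 0 0 + Real.exp cX * p 1 1 0 0) * (p 0 0 1 0 + Real.exp cX * p 0 1 1 0)) := by
    have h := hORm
    rw [hsq10, hsq01, hsq11, hsq00] at h
    have hc : (Real.exp c0 * Real.exp c0 * Real.exp cT * Real.exp cY) *
        ((p 1 0 1 0 + Real.exp cX * p 1 1 1 0) * (p 0 0 0 0 + Real.exp cX * p 0 1 0 0))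
        = (Real.exp c0 * Real.exp c0 * Real.exp cT * Real.exp cY) *
        (ORm * ((p 1 0 0 0 + Real.exp cX * p 1 1 0 0) * (p 0 0 1 0 + Real.exp cX * p 0 1 1 0))) := by
      linear_combination -h
    exact mul_left_cancel₀ (by positivity) hc
  -- quadratic equations for exp bX and exp cX
  have hPd : (p 1 1 1 0 * p 0 1 0 0 - ORm * (p 1 1 0 0 * p 0 1 1 0)) * (Real.exp bX) ^ 2
      + (p 1 0 1 0 * p 0 1 0 0 + p 1 1 1 0 * p 0 0 0 0
        - ORm * (p 1 0 0 0 * p 0 1 1 0 + p 1 1 0 0 * p 0 0 1 0)) * Real.exp bX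
      + (p 1 0 1 0 * p 0 0 0 0 - ORm * (p 1 0 0 0 * p 0 0 1 0)) = 0 := by
    linear_combination key_p
  have hPe : (p 1 1 1 0 * p 0 1 0 0 - ORm * (p 1 1 0 0 * p 0 1 1 0)) * (Real.exp cX) ^ 2
      + (p 1 0 1 0 * p 0 1 0 0 + p 1 1 1 0 * p 0 0 0 0
        - ORm * (p 1 0 0 0 * p 0 1 1 0 + p 1 1 0 0 * p 0 0 1 0)) * Real.exp cX
      + (p 1 0 1 0 * p 0 0 0 0 - ORm * (p 1 0 0 0 * p 0 0 1 0)) = 0 := by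
    linear_combination key_q
  -- strict betweenness gives opposite signs
  have hprod : (ORm - OR1) * (ORm - OR0) < 0 := by
    obtain ⟨h1, h2⟩ := hbetween
    rcases le_total OR1 OR0 with h | h
    · rw [min_eq_left h] at h1; rw [max_eq_right h] at h2
      exact mul_neg_of_pos_of_neg (sub_pos.mpr h1) (sub_neg.mpr h2)
    · rw [min_eq_right h] at h1; rw [max_eq_left h] at h2
      exact mul_neg_of_neg_of_pos (sub_neg.mpr h2) (sub_pos.mpr h1)
  rw [eq_div_iff (mul_pos (hp_pos 1 1 0 0) (hp_pos 0 1 1 0)).ne'] at hOR1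
  rw [eq_div_iff (mul_pos (hp_pos 1 0 0 0) (hp_pos 0 0 1 0)).ne'] at hOR0
  have hs : (p 1 0 1 0 * p 0 0 0 0 - ORm * (p 1 0 0 0 * p 0 0 1 0))
      * (p 1 1 1 0 * p 0 1 0 0 - ORm * (p 1 1 0 0 * p 0 1 1 0)) < 0 := by
    rw [← hOR0, ← hOR1]
    have hPQ : 0 < (p 1 0 0 0 * p 0 0 1 0) * (p 1 1 0 0 * p 0 1 1 0) :=
      mul_pos (mul_pos (hp_pos 1 0 0 0) (hp_pos 0 0 1 0))
        (mul_pos (hp_pos 1 1 0 0) (hp_pos 0 1 1 0))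
    have heq : (OR0 * (p 1 0 0 0 * p 0 0 1 0) - ORm * (p 1 0 0 0 * p 0 0 1 0))
        * (OR1 * (p 1 1 0 0 * p 0 1 1 0) - ORm * (p 1 1 0 0 * p 0 1 1 0))
        = ((ORm - OR1) * (ORm - OR0))
          * ((p 1 0 0 0 * p 0 0 1 0) * (p 1 1 0 0 * p 0 1 1 0)) := by ring
    rw [heq]
    exact mul_neg_of_neg_of_pos hprod hPQ
  have hde : Real.exp bX = Real.exp cX :=
    quad_root_unique (Real.exp_pos bX) (Real.exp_pos cX) hPd hPe hs
  -- identify the remaining parameters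
  rw [← hde] at o00 o10 o01
  have hX00 : (0:ℝ) < p 0 0 0 0 + Real.exp bX * p 0 1 0 0 :=
    add_pos (hp_pos 0 0 0 0) (mul_pos (Real.exp_pos bX) (hp_pos 0 1 0 0))
  have hX10 : (0:ℝ) < p 1 0 0 0 + Real.exp bX * p 1 1 0 0 :=
    add_pos (hp_pos 1 0 0 0) (mul_pos (Real.exp_pos bX) (hp_pos 1 1 0 0))
  have hX01 : (0:ℝ) < p 0 0 1 0 + Real.exp bX * p 0 1 1 0 :=
    add_pos (hp_pos 0 0 1 0) (mul_pos (Real.exp_pos bX) (hp_pos 0 1 1 0))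
  have ha : Real.exp b0 = Real.exp c0 := mul_right_cancel₀ hX00.ne' o00
  have hT : Real.exp bT = Real.exp cT := by
    have h := mul_right_cancel₀ hX10.ne' o10
    rw [← ha] at h
    exact mul_left_cancel₀ (Real.exp_pos b0).ne' h
  have hY : Real.exp bY = Real.exp cY := by
    have h := mul_right_cancel₀ hX01.ne' o01
    rw [← ha] at h
    exact mul_left_cancel₀ (Real.exp_pos b0).ne' h
  have hb0 : b0 = c0 := Real.exp_injective ha
  have hbT : bT = cT := Real.exp_injective hT
  have hbX : bX = cX := Real.exp_injective hde
  have hbY : bY = cY := Real.exp_injective hY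
  funext t x y m
  fin_cases m
  · exact hobs0 t x y
  · show p t x y 1 = q t x y 1
    rw [hpm t x y, hqm t x y, hobs0 t x y, hb0, hbT, hbX, hbY]
end

section
/- Let X and Y be binary (J = K = 2) and let p be a joint distribution of (T,X,Y,M) with all cells strictly positive (p(t,x,y,m) > 0 for all cells) that satisfies p(t,x,y,1) = exp(β₀ + β_T·t + β_X·x + β_Y·y)·p(t,x,y,0) for all t,x,y ∈ {0,1}, for some reals β₀, β_T, β_X, β_Y. Define E = p(0,1,1,0)·p(1,1,0,0)/(p(0,+,1,1)·p(1,+,0,1)) − p(0,1,0,0)·p(1,1,1,0)/(p(0,+,0,1)·p(1,+,1,1)), F = [p(0,1,1,0)·p(1,0,0,0) + p(0,0,1,0)·p(1,1,0,0)]/(p(0,+,1,1)·p(1,+,0,1)) − [p(0,1,0,0)·p(1,0,1,0) + p(0,0,0,0)·p(1,1,1,0)]/(p(0,+,0,1)·p(1,+,1,1)), and G = p(0,0,1,0)·p(1,0,0,0)/(p(0,+,1,1)·p(1,+,0,1)) − p(0,0,0,0)·p(1,0,1,0)/(p(0,+,0,1)·p(1,+,1,1)). Then B = exp(β_X) satisfies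 the quadratic equation E·B² + F·B + G = 0. -/
/-!
Under the mechanism, `p(t,x,y,1) = c(t,y) · Bˣ · p(t,x,y,0)` with
`c(t,y) = exp(β₀ + β_T t + β_Y y)`, so `p(t,+,y,1) = c(t,y) · q(t,y)` where
`q(t,y) = p(t,0,y,0) + B · p(t,1,y,0)` is `tiltedSum p B t y`. Collecting powers of `B`,
the quadratic `E B² + F B + G` is
`q(0,1) q(1,0) / (p(0,+,1,1) p(1,+,0,1)) - q(0,0) q(1,1) / (p(0,+,0,1) p(1,+,1,1))`,
and both terms equal `1 / (c(0,1) c(1,0)) = 1 / (c(0,0) c(1,1))`.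
-/

open Real

def tiltedSum (p : Fin 2 → Fin 2 → Fin 2 → Fin 2 → ℝ) (B : ℝ) (t y : Fin 2) : ℝ :=
  p t 0 y 0 + B * p t 1 y 0

lemma sum_missing_eq_exp_mul_tiltedSum {p : Fin 2 → Fin 2 → Fin 2 → Fin 2 → ℝ}
    {b0 bT bX bY : ℝ}
    (hp_mech : ∀ t x y : Fin 2,
      p t x y 1 = exp (b0 + bT * ((t : ℕ) : ℝ) + bX * ((x : ℕ) : ℝ)
        + bY * ((y : ℕ) : ℝ)) * p t x y 0)
    (t y : Fin 2) :
    ∑ x, p t x y 1 = exp (b0 + bT * (t : ℕ) + bY * (y : ℕ)) * tiltedSum p (exp bX) t y := by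
  simp only [Fin.sum_univ_two, hp_mech, tiltedSum, Fin.val_zero, Fin.val_one, Nat.cast_zero,
    Nat.cast_one, mul_zero, mul_one, exp_add, exp_zero]
  ring

lemma tiltedSum_div_sum_missing_eq_exp {p : Fin 2 → Fin 2 → Fin 2 → Fin 2 → ℝ}
    {b0 bT bX bY : ℝ}
    (hp_mech : ∀ t x y : Fin 2,
      p t x y 1 = exp (b0 + bT * ((t : ℕ) : ℝ) + bX * ((x : ℕ) : ℝ)
        + bY * ((y : ℕ) : ℝ)) * p t x y 0)
    {t y : Fin 2} (h0 : 0 < p t 0 y 0) (h1 : 0 < p t 1 y 0) :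
    tiltedSum p (exp bX) t y / ∑ x, p t x y 1
      = exp (-(b0 + bT * (t : ℕ) + bY * (y : ℕ))) := by
  have hq : tiltedSum p (exp bX) t y ≠ 0 := by unfold tiltedSum; positivity
  rw [sum_missing_eq_exp_mul_tiltedSum hp_mech, exp_neg, div_mul_cancel_right₀ hq]

lemma quadratic_eq_sub_tiltedSum_div (p : Fin 2 → Fin 2 → Fin 2 → Fin 2 → ℝ)
    (B S₀₁ S₁₀ S₀₀ S₁₁ : ℝ) :
    (p 0 1 1 0 * p 1 1 0 0 / (S₀₁ * S₁₀)
        - p 0 1 0 0 * p 1 1 1 0 / (S₀₀ * S₁₁)) * B ^ 2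
      + ((p 0 1 1 0 * p 1 0 0 0 + p 0 0 1 0 * p 1 1 0 0) / (S₀₁ * S₁₀)
        - (p 0 1 0 0 * p 1 0 1 0 + p 0 0 0 0 * p 1 1 1 0) / (S₀₀ * S₁₁)) * B
      + (p 0 0 1 0 * p 1 0 0 0 / (S₀₁ * S₁₀) - p 0 0 0 0 * p 1 0 1 0 / (S₀₀ * S₁₁))
      = tiltedSum p B 0 1 / S₀₁ * (tiltedSum p B 1 0 / S₁₀)
        - tiltedSum p B 0 0 / S₀₀ * (tiltedSum p B 1 1 / S₁₁) := by
  simp only [tiltedSum, div_mul_div_comm]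
  ring

theorem mechanism4_quadratic_general
    (p : Fin 2 → Fin 2 → Fin 2 → Fin 2 → ℝ)
    (hp_pos : ∀ t x y m, 0 < p t x y m)
    (b0 bT bX bY : ℝ)
    -- logistic missing mechanism 4
    (hp_mech : ∀ t x y : Fin 2,
      p t x y 1 = Real.exp (b0 + bT * ((t : ℕ) : ℝ) + bX * ((x : ℕ) : ℝ)
        + bY * ((y : ℕ) : ℝ)) * p t x y 0)
    (E F G B : ℝ)
    (hE : E = p 0 1 1 0 * p 1 1 0 0 / ((∑ x, p 0 x 1 1) * (∑ x, p 1 x 0 1))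
            - p 0 1 0 0 * p 1 1 1 0 / ((∑ x, p 0 x 0 1) * (∑ x, p 1 x 1 1)))
    (hF : F = (p 0 1 1 0 * p 1 0 0 0 + p 0 0 1 0 * p 1 1 0 0)
                / ((∑ x, p 0 x 1 1) * (∑ x, p 1 x 0 1))
            - (p 0 1 0 0 * p 1 0 1 0 + p 0 0 0 0 * p 1 1 1 0)
                / ((∑ x, p 0 x 0 1) * (∑ x, p 1 x 1 1)))
    (hG : G = p 0 0 1 0 * p 1 0 0 0 / ((∑ x, p 0 x 1 1) * (∑ x, p 1 x 0 1))
            - p 0 0 0 0 * p 1 0 1 0 / ((∑ x, p 0 x 0 1) * (∑ x, p 1 x 1 1)))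
    (hB : B = Real.exp bX) :
    E * B ^ 2 + F * B + G = 0 := by
  subst hE hF hG hB
  have ratio (t y : Fin 2) :=
    tiltedSum_div_sum_missing_eq_exp hp_mech (hp_pos t 0 y 0) (hp_pos t 1 y 0)
  rw [quadratic_eq_sub_tiltedSum_div, ratio, ratio, ratio, ratio, ← exp_add, ← exp_add,
    sub_eq_zero]
  congr 1
  simp only [Fin.val_zero, Fin.val_one, Nat.cast_zero, Nat.cast_one]
  ring

/-- Under the logistic missing mechanism 4 (binary X and Y), the quantity
B = exp(β_X) satisfies the quadratic equation E·B² + F·B + G = 0 built from the observed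
data. -/
theorem mechanism4_quadratic
    (p : Fin 2 → Fin 2 → Fin 2 → Fin 2 → ℝ)
    (hp_pos : ∀ t x y m, 0 < p t x y m)
    (hp_sum : ∑ t, ∑ x, ∑ y, ∑ m, p t x y m = 1)
    (b0 bT bX bY : ℝ)
    -- logistic missing mechanism 4
    (hp_mech : ∀ t x y : Fin 2,
      p t x y 1 = Real.exp (b0 + bT * ((t : ℕ) : ℝ) + bX * ((x : ℕ) : ℝ)
        + bY * ((y : ℕ) : ℝ)) * p t x y 0)
    (E F G B : ℝ)
    (hE : E = p 0 1 1 0 * p 1 1 0 0 / ((∑ x, p 0 x 1 1) * (∑ x, p 1 x 0 1))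
            - p 0 1 0 0 * p 1 1 1 0 / ((∑ x, p 0 x 0 1) * (∑ x, p 1 x 1 1)))
    (hF : F = (p 0 1 1 0 * p 1 0 0 0 + p 0 0 1 0 * p 1 1 0 0)
                / ((∑ x, p 0 x 1 1) * (∑ x, p 1 x 0 1))
            - (p 0 1 0 0 * p 1 0 1 0 + p 0 0 0 0 * p 1 1 1 0)
                / ((∑ x, p 0 x 0 1) * (∑ x, p 1 x 1 1)))
    (hG : G = p 0 0 1 0 * p 1 0 0 0 / ((∑ x, p 0 x 1 1) * (∑ x, p 1 x 0 1))
            - p 0 0 0 0 * p 1 0 1 0 / ((∑ x, p 0 x 0 1) * (∑ x, p 1 x 1 1)))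
    (hB : B = Real.exp bX) :
    E * B ^ 2 + F * B + G = 0 :=
  mechanism4_quadratic_general p hp_pos b0 bT bX bY hp_mech E F G B hE hF hG hB
end

section
/- Let p : {0,1}⁴ → ℝ be any strictly positive table, i.e. p(t,x,y,m) > 0 for all t,x,y,m ∈ {0,1}, and write p(t,+,y,m) = Σ_x p(t,x,y,m). Define E = p(0,1,1,0)·p(1,1,0,0)/(p(0,+,1,1)·p(1,+,0,1)) − p(0,1,0,0)·p(1,1,1,0)/(p(0,+,0,1)·p(1,+,1,1)) and G = p(0,0,1,0)·p(1,0,0,0)/(p(0,+,1,1)·p(1,+,0,1)) − p(0,0,0,0)·p(1,0,1,0)/(p(0,+,0,1)·p(1,+,1,1)). Define OR_{YT|M=1} = [p(1,+,1,1)·p(0,+,0,1)]/[p(1,+,0,1)·p(0,+,1,1)] and, for x ∈ {0,1}, OR_{YT|X=x,M=0} = [p(1,x,1,0)·p(0,x,0,0)]/[p(1,x,0,0)·p(0,x,1,0)]. Then E·G and (OR_{YT|M=1} − OR_{YT|X=1,M=0})·(OR_{YT|M=1} − OR_{YT|X=0,M=0}) have the same sign: E·G > 0 ⟺ the product is > 0,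 E·G < 0 ⟺ the product is < 0, and E·G = 0 ⟺ the product is = 0. Consequently, E·G ≤ 0 if and only if OR_{YT|M=1} lies (weakly) between OR_{YT|X=1,M=0} and OR_{YT|X=0,M=0}. -/
private lemma eg_aux (c P OR1 OR0 ORm : ℝ) (hc : 0 < c)
    (key : P = c * ((ORm - OR1) * (ORm - OR0))) :
    (0 < P ↔ 0 < (ORm - OR1) * (ORm - OR0)) ∧
    (P < 0 ↔ (ORm - OR1) * (ORm - OR0) < 0) ∧
    (P = 0 ↔ (ORm - OR1) * (ORm - OR0) = 0) ∧
    (P ≤ 0 ↔ (min OR1 OR0 ≤ ORm ∧ ORm ≤ max OR1 OR0)) := by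
  subst key
  refine ⟨⟨fun h => ?_, fun h => ?_⟩, ⟨fun h => ?_, fun h => ?_⟩, ⟨fun h => ?_, fun h => ?_⟩, ?_⟩
  · nlinarith
  · nlinarith
  · nlinarith
  · nlinarith
  · exact (mul_eq_zero.mp h).resolve_left (ne_of_gt hc)
  · rw [h, mul_zero]
  · have hQ : c * ((ORm - OR1) * (ORm - OR0)) ≤ 0 ↔ (ORm - OR1) * (ORm - OR0) ≤ 0 := by
      constructor <;> intro h <;> nlinarith
    rw [hQ]
    rcases le_total OR1 OR0 with h | h
    · rw [min_eq_left h, max_eq_right h]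
      constructor
      · intro hq
        rcases mul_nonpos_iff.mp hq with ⟨ha, hb⟩ | ⟨ha, hb⟩ <;> constructor <;> linarith
      · intro ⟨ha, hb⟩; nlinarith
    · rw [min_eq_right h, max_eq_left h]
      constructor
      · intro hq
        rcases mul_nonpos_iff.mp hq with ⟨ha, hb⟩ | ⟨ha, hb⟩ <;> constructor <;> linarith
      · intro ⟨ha, hb⟩; nlinarith

/-- For any strictly positive table p(t,x,y,m), the product E·G has the same
sign as (OR_{YT|M=1} − OR_{YT|X=1,M=0})·(OR_{YT|M=1} − OR_{YT|X=0,M=0}); consequently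
E·G ≤ 0 iff OR_{YT|M=1} lies weakly between the two conditional odds ratios. -/
theorem EG_sign_condition
    (p : Fin 2 → Fin 2 → Fin 2 → Fin 2 → ℝ)
    (hp_pos : ∀ t x y m, 0 < p t x y m)
    (E G ORm OR1 OR0 : ℝ)
    (hE : E = p 0 1 1 0 * p 1 1 0 0 / ((∑ x, p 0 x 1 1) * (∑ x, p 1 x 0 1))
            - p 0 1 0 0 * p 1 1 1 0 / ((∑ x, p 0 x 0 1) * (∑ x, p 1 x 1 1)))
    (hG : G = p 0 0 1 0 * p 1 0 0 0 / ((∑ x, p 0 x 1 1) * (∑ x, p 1 x 0 1))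
            - p 0 0 0 0 * p 1 0 1 0 / ((∑ x, p 0 x 0 1) * (∑ x, p 1 x 1 1)))
    (hORm : ORm = ((∑ x, p 1 x 1 1) * (∑ x, p 0 x 0 1))
      / ((∑ x, p 1 x 0 1) * (∑ x, p 0 x 1 1)))
    (hOR1 : OR1 = (p 1 1 1 0 * p 0 1 0 0) / (p 1 1 0 0 * p 0 1 1 0))
    (hOR0 : OR0 = (p 1 0 1 0 * p 0 0 0 0) / (p 1 0 0 0 * p 0 0 1 0)) :
    (0 < E * G ↔ 0 < (ORm - OR1) * (ORm - OR0)) ∧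
    (E * G < 0 ↔ (ORm - OR1) * (ORm - OR0) < 0) ∧
    (E * G = 0 ↔ (ORm - OR1) * (ORm - OR0) = 0) ∧
    (E * G ≤ 0 ↔ (min OR1 OR0 ≤ ORm ∧ ORm ≤ max OR1 OR0)) := by
  simp only [Fin.sum_univ_two] at hE hG hORm
  have h1 := hp_pos 0 0 1 1
  have h2 := hp_pos 0 1 1 1
  have h3 := hp_pos 1 0 0 1
  have h4 := hp_pos 1 1 0 1
  have h5 := hp_pos 0 0 0 1
  have h6 := hp_pos 0 1 0 1
  have h7 := hp_pos 1 0 1 1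
  have h8 := hp_pos 1 1 1 1
  have h9 := hp_pos 0 1 1 0
  have h10 := hp_pos 1 1 0 0
  have h11 := hp_pos 0 1 0 0
  have h12 := hp_pos 1 1 1 0
  have h13 := hp_pos 0 0 1 0
  have h14 := hp_pos 1 0 0 0
  have h15 := hp_pos 0 0 0 0
  have h16 := hp_pos 1 0 1 0
  have hA : 0 < (p 0 0 1 1 + p 0 1 1 1) * (p 1 0 0 1 + p 1 1 0 1) := by positivity
  have hB : 0 < (p 0 0 0 1 + p 0 1 0 1) * (p 1 0 1 1 + p 1 1 1 1) := by positivity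
  set c1 : ℝ := p 0 1 1 0 * p 1 1 0 0 / ((p 0 0 0 1 + p 0 1 0 1) * (p 1 0 1 1 + p 1 1 1 1)) with hc1
  set c0 : ℝ := p 0 0 1 0 * p 1 0 0 0 / ((p 0 0 0 1 + p 0 1 0 1) * (p 1 0 1 1 + p 1 1 1 1)) with hc0
  have hc1pos : 0 < c1 := by positivity
  have hc0pos : 0 < c0 := by positivity
  have hE' : E = c1 * (ORm - OR1) := by
    rw [hE, hORm, hOR1, hc1]
    field_simp
  have hG' : G = c0 * (ORm - OR0) := by
    rw [hG, hORm, hOR0, hc0]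
    field_simp
  have key : E * G = (c1 * c0) * ((ORm - OR1) * (ORm - OR0)) := by
    rw [hE', hG']; ring
  have hc : 0 < c1 * c0 := mul_pos hc1pos hc0pos
  exact eg_aux (c1 * c0) (E * G) OR1 OR0 ORm hc key
end

section
/- Let Y be binary (K = 2), J ≥ 1, let x ∈ {0,…,J−1} be fixed, and let p be a joint distribution of (T,X,Y,M) with p(t,x,y,0) > 0 for all t,y ∈ {0,1}. Let D : ℝ → ℝ → ℝ be nondecreasing in its first argument and nonincreasing in its second argument. Then D(P_p(Y=1|T=1,X=x), P_p(Y=1|T=0,X=x)) ≥ D( p(1,x,1,0)/(p(1,x,0,0) + p(1,x,1,0) + p(1,+,0,1)), (p(0,x,1,0) + p(0,+,1,1))/(p(0,x,0,0) + p(0,x,1,0) + p(0,+,1,1)) ). That is, the displayed quantity is a lower bound for the subgroup causal effect D[P(Y=1|T=1,X=x), P(Y=1|T=0,X=x)] in terms of the observed data alone. -/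
/-- Theorem 5, lower bound: For binary Y, the subgroup causal effect
D[P(Y=1|T=1,X=x), P(Y=1|T=0,X=x)] is bounded below by the displayed function of the
observed data, for any D nondecreasing in its first and nonincreasing in its second
argument. -/
theorem mechanism5_lower_bound (J : ℕ) (hJ : 1 ≤ J) (x : Fin J)
    (p : Fin 2 → Fin J → Fin 2 → Fin 2 → ℝ)
    (hp_nonneg : ∀ t x' y m, 0 ≤ p t x' y m)
    (hp_sum : ∑ t, ∑ x', ∑ y, ∑ m, p t x' y m = 1)
    (hp_pos : ∀ t y : Fin 2, 0 < p t x y 0)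
    (D : ℝ → ℝ → ℝ)
    (hD1 : ∀ a a' b : ℝ, a ≤ a' → D a b ≤ D a' b)
    (hD2 : ∀ a b b' : ℝ, b ≤ b' → D a b' ≤ D a b) :
    D (p 1 x 1 0 / (p 1 x 0 0 + p 1 x 1 0 + (∑ x', p 1 x' 0 1)))
      ((p 0 x 1 0 + (∑ x', p 0 x' 1 1))
        / (p 0 x 0 0 + p 0 x 1 0 + (∑ x', p 0 x' 1 1)))
    ≤ D ((∑ m, p 1 x 1 m) / (∑ y, ∑ m, p 1 x y m))
        ((∑ m, p 0 x 1 m) / (∑ y, ∑ m, p 0 x y m)) := by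

  have hS1 : p 1 x 0 1 ≤ ∑ x', p 1 x' 0 1 :=
    Finset.single_le_sum (fun i _ => hp_nonneg 1 i 0 1) (Finset.mem_univ x)
  have hS0 : p 0 x 1 1 ≤ ∑ x', p 0 x' 1 1 :=
    Finset.single_le_sum (fun i _ => hp_nonneg 0 i 1 1) (Finset.mem_univ x)
  have hS1n : (0:ℝ) ≤ ∑ x', p 1 x' 0 1 :=
    Finset.sum_nonneg (fun i _ => hp_nonneg 1 i 0 1)
  have hS0n : (0:ℝ) ≤ ∑ x', p 0 x' 1 1 :=
    Finset.sum_nonneg (fun i _ => hp_nonneg 0 i 1 1)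
  simp only [Fin.sum_univ_two]
  have h10 := hp_pos 1 0
  have h11 := hp_pos 1 1
  have h00 := hp_pos 0 0
  have h01 := hp_pos 0 1
  have n1 := hp_nonneg 1 x 1 1
  have n2 := hp_nonneg 1 x 0 1
  have n3 := hp_nonneg 0 x 1 1
  have n4 := hp_nonneg 0 x 0 1
  have key1 : p 1 x 1 0 / (p 1 x 0 0 + p 1 x 1 0 + (∑ x', p 1 x' 0 1))
      ≤ (p 1 x 1 0 + p 1 x 1 1) / (p 1 x 0 0 + p 1 x 0 1 + (p 1 x 1 0 + p 1 x 1 1)) := by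
    rw [div_le_div_iff₀ (by linarith) (by linarith)]
    nlinarith [mul_nonneg n1 hS1n, mul_nonneg n1 (hp_nonneg 1 x 0 0),
      mul_nonneg (hp_pos 1 1).le (sub_nonneg.mpr hS1)]
  have key2 : (p 0 x 1 0 + p 0 x 1 1) / (p 0 x 0 0 + p 0 x 0 1 + (p 0 x 1 0 + p 0 x 1 1))
      ≤ (p 0 x 1 0 + (∑ x', p 0 x' 1 1)) / (p 0 x 0 0 + p 0 x 1 0 + (∑ x', p 0 x' 1 1)) := by
    rw [div_le_div_iff₀ (by linarith) (by linarith)]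
    nlinarith [mul_nonneg n4 (by linarith : (0:ℝ) ≤ p 0 x 1 0 + ∑ x', p 0 x' 1 1),
      mul_nonneg (hp_pos 0 0).le (sub_nonneg.mpr hS0)]
  exact le_trans (hD1 _ _ _ key1) (hD2 _ _ _ key2)
end

section
/- Let Y be binary (K = 2), J ≥ 1, let x ∈ {0,…,J−1} be fixed, and let p be a joint distribution of (T,X,Y,M) with p(t,x,y,0) > 0 for all t,y ∈ {0,1}. Let D : ℝ → ℝ → ℝ be nondecreasing in its first argument and nonincreasing in its second argument. Then D(P_p(Y=1|T=1,X=x), P_p(Y=1|T=0,X=x)) ≤ D( (p(1,x,1,0) + p(1,+,1,1))/(p(1,x,0,0) + p(1,x,1,0) + p(1,+,1,1)), p(0,x,1,0)/(p(0,x,0,0) + p(0,x,1,0) + p(0,+,0,1)) ). That is, the displayed quantity is an upper bound for the subgroup causal effect D[P(Y=1|T=1,X=x), P(Y=1|T=0,X=x)] in terms of the observed data alone. -/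
/-- Theorem 5, upper bound: For binary Y, the subgroup causal effect
D[P(Y=1|T=1,X=x), P(Y=1|T=0,X=x)] is bounded above by the displayed function of the
observed data, for any D nondecreasing in its first and nonincreasing in its second
argument. -/
theorem mechanism5_upper_bound (J : ℕ) (hJ : 1 ≤ J) (x : Fin J)
    (p : Fin 2 → Fin J → Fin 2 → Fin 2 → ℝ)
    (hp_nonneg : ∀ t x' y m, 0 ≤ p t x' y m)
    (hp_sum : ∑ t, ∑ x', ∑ y, ∑ m, p t x' y m = 1)
    (hp_pos : ∀ t y : Fin 2, 0 < p t x y 0)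
    (D : ℝ → ℝ → ℝ)
    (hD1 : ∀ a a' b : ℝ, a ≤ a' → D a b ≤ D a' b)
    (hD2 : ∀ a b b' : ℝ, b ≤ b' → D a b' ≤ D a b) :
    D ((∑ m, p 1 x 1 m) / (∑ y, ∑ m, p 1 x y m))
      ((∑ m, p 0 x 1 m) / (∑ y, ∑ m, p 0 x y m))
    ≤ D ((p 1 x 1 0 + (∑ x', p 1 x' 1 1))
          / (p 1 x 0 0 + p 1 x 1 0 + (∑ x', p 1 x' 1 1)))
        (p 0 x 1 0 / (p 0 x 0 0 + p 0 x 1 0 + (∑ x', p 0 x' 0 1))) := by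
  have hB : p 1 x 1 1 ≤ ∑ x', p 1 x' 1 1 :=
    Finset.single_le_sum (fun i _ => hp_nonneg 1 i 1 1) (Finset.mem_univ x)
  have hD0 : p 0 x 0 1 ≤ ∑ x', p 0 x' 0 1 :=
    Finset.single_le_sum (fun i _ => hp_nonneg 0 i 0 1) (Finset.mem_univ x)
  have hBnn : (0:ℝ) ≤ ∑ x', p 1 x' 1 1 :=
    Finset.sum_nonneg fun i _ => hp_nonneg 1 i 1 1
  have hD0nn : (0:ℝ) ≤ ∑ x', p 0 x' 0 1 :=
    Finset.sum_nonneg fun i _ => hp_nonneg 0 i 0 1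
  have h100 := hp_pos 1 0
  have h110 := hp_pos 1 1
  have h000 := hp_pos 0 0
  have h010 := hp_pos 0 1
  have h101 := hp_nonneg 1 x 0 1
  have h111 := hp_nonneg 1 x 1 1
  have h001 := hp_nonneg 0 x 0 1
  have h011 := hp_nonneg 0 x 1 1
  simp only [Fin.sum_univ_two]
  set B := ∑ x', p 1 x' 1 1
  set C := ∑ x', p 0 x' 0 1
  have h1 : (p 1 x 1 0 + p 1 x 1 1) / ((p 1 x 0 0 + p 1 x 0 1) + (p 1 x 1 0 + p 1 x 1 1))
      ≤ (p 1 x 1 0 + B) / (p 1 x 0 0 + p 1 x 1 0 + B) := by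
    rw [div_le_div_iff₀ (by linarith) (by linarith)]
    nlinarith [mul_nonneg h101 hBnn, mul_nonneg h101 h110.le,
      mul_nonneg (sub_nonneg.2 hB) h100.le]
  have h2 : p 0 x 1 0 / (p 0 x 0 0 + p 0 x 1 0 + C)
      ≤ (p 0 x 1 0 + p 0 x 1 1) / ((p 0 x 0 0 + p 0 x 0 1) + (p 0 x 1 0 + p 0 x 1 1)) := by
    rw [div_le_div_iff₀ (by linarith) (by linarith)]
    nlinarith [mul_nonneg (sub_nonneg.2 hD0) h010.le, mul_nonneg h011 h000.le,
      mul_nonneg h011 hD0nn]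
  calc D ((p 1 x 1 0 + p 1 x 1 1) / ((p 1 x 0 0 + p 1 x 0 1) + (p 1 x 1 0 + p 1 x 1 1)))
        ((p 0 x 1 0 + p 0 x 1 1) / ((p 0 x 0 0 + p 0 x 0 1) + (p 0 x 1 0 + p 0 x 1 1)))
      ≤ D ((p 1 x 1 0 + B) / (p 1 x 0 0 + p 1 x 1 0 + B))
        ((p 0 x 1 0 + p 0 x 1 1) / ((p 0 x 0 0 + p 0 x 0 1) + (p 0 x 1 0 + p 0 x 1 1))) :=
        hD1 _ _ _ h1
    _ ≤ D ((p 1 x 1 0 + B) / (p 1 x 0 0 + p 1 x 1 0 + B))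
        (p 0 x 1 0 / (p 0 x 0 0 + p 0 x 1 0 + C)) := hD2 _ _ _ h2
end

section
/- (Attainability of the lower bound.) Let Y be binary (K = 2), J ≥ 2, and fix x ∈ {0,…,J−1}. Let a(t,x',y) > 0 for all t,y ∈ {0,1} and x' ∈ {0,…,J−1}, and b(t,y) ≥ 0 for all t,y ∈ {0,1}, with Σ_{t,x',y} a(t,x',y) + Σ_{t,y} b(t,y) = 1. Then there exists a joint distribution p of (T,X,Y,M) whose observed data matches these values, i.e. p(t,x',y,0) = a(t,x',y) for all (t,x',y) and p(t,+,y,1) = b(t,y) for all (t,y), such that P_p(Y=1|T=1,X=x) = a(1,x,1)/(a(1,x,0) + a(1,x,1) + b(1,0)) and P_p(Y=1|T=0,X=x) = (a(0,x,1) + b(0,1))/(a(0,x,0) + a(0,x,1) + b(0,1)). -/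
/-- Attainability of the lower bound of Theorem 5. Given any feasible observed
data (a, b) with J ≥ 2, there is a joint distribution p matching the observed data whose
subgroup outcome probabilities attain the lower-bound values. -/
theorem mechanism5_lower_bound_attainable (J : ℕ) (hJ : 2 ≤ J) (x : Fin J)
    (a : Fin 2 → Fin J → Fin 2 → ℝ) (b : Fin 2 → Fin 2 → ℝ)
    (ha_pos : ∀ t x' y, 0 < a t x' y)
    (hb_nonneg : ∀ t y, 0 ≤ b t y)
    (hsum : (∑ t, ∑ x', ∑ y, a t x' y) + (∑ t, ∑ y, b t y) = 1) :
    ∃ p : Fin 2 → Fin J → Fin 2 → Fin 2 → ℝ,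
      (∀ t x' y m, 0 ≤ p t x' y m) ∧
      (∑ t, ∑ x', ∑ y, ∑ m, p t x' y m = 1) ∧
      (∀ t x' y, p t x' y 0 = a t x' y) ∧
      (∀ t y, ∑ x', p t x' y 1 = b t y) ∧
      ((∑ m, p 1 x 1 m) / (∑ y, ∑ m, p 1 x y m)
        = a 1 x 1 / (a 1 x 0 + a 1 x 1 + b 1 0)) ∧
      ((∑ m, p 0 x 1 m) / (∑ y, ∑ m, p 0 x y m)
        = (a 0 x 1 + b 0 1) / (a 0 x 0 + a 0 x 1 + b 0 1)) := by
  have h0 : (0 : ℕ) < J := by omega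
  have h1 : (1 : ℕ) < J := by omega
  set x0 : Fin J := ⟨0, h0⟩
  set x1 : Fin J := ⟨1, h1⟩
  set x'' : Fin J := if x = x0 then x1 else x0 with hx''
  have hxx : x'' ≠ x := by
    rcases eq_or_ne x x0 with h | h
    · rw [hx'', if_pos h, h]
      simp [x0, x1, Fin.ext_iff]
    · rw [hx'', if_neg h]
      exact fun he => h he.symm
  set place : Fin 2 → Fin 2 → Fin J := fun t y => if t = y then x'' else x with hplace
  set p : Fin 2 → Fin J → Fin 2 → Fin 2 → ℝ :=
    fun t x' y m => if m = 0 then a t x' y else if x' = place t y then b t y else 0 with hp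
  have hp0 : ∀ t x' y, p t x' y 0 = a t x' y := by intro t x' y; simp [hp]
  have hp1 : ∀ t x' y, p t x' y 1 = if x' = place t y then b t y else 0 := by
    intro t x' y; simp [hp]
  have hmarg : ∀ t y, (∑ x', p t x' y 1) = b t y := by
    intro t y
    simp only [hp1]
    simp [Finset.sum_ite_eq']
  have hp10 : place 1 0 = x := by simp [hplace]
  have hp11 : place 1 1 = x'' := by simp [hplace]
  have hp00 : place 0 0 = x'' := by simp [hplace]
  have hp01 : place 0 1 = x := by simp [hplace]
  refine ⟨p, ?_, ?_, hp0, hmarg, ?_, ?_⟩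
  · intro t x' y m
    rw [hp]
    dsimp only
    split
    · exact (ha_pos t x' y).le
    · split
      · exact hb_nonneg t y
      · exact le_refl 0
  · have step : ∀ t x', (∑ y, ∑ m, p t x' y m)
        = (∑ y, a t x' y) + (∑ y : Fin 2, if x' = place t y then b t y else 0) := by
      intro t x'
      rw [Fin.sum_univ_two, Fin.sum_univ_two (f := fun m => p t x' 0 m),
        Fin.sum_univ_two (f := fun m => p t x' 1 m), hp0, hp0, hp1, hp1, Fin.sum_univ_two,
        Fin.sum_univ_two]
      ring
    calc (∑ t, ∑ x', ∑ y, ∑ m, p t x' y m)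
        = (∑ t, ∑ x', ((∑ y, a t x' y)
            + (∑ y : Fin 2, if x' = place t y then b t y else 0))) := by
          exact Finset.sum_congr rfl fun t _ => Finset.sum_congr rfl fun x' _ => step t x'
      _ = (∑ t, ∑ x', ∑ y, a t x' y)
            + (∑ t, ∑ x', ∑ y : Fin 2, if x' = place t y then b t y else 0) := by
          simp [Finset.sum_add_distrib]
      _ = (∑ t, ∑ x', ∑ y, a t x' y) + (∑ t, ∑ y, b t y) := by
          congr 1
          refine Finset.sum_congr rfl fun t _ => ?_
          rw [Finset.sum_comm]
          exact Finset.sum_congr rfl fun y _ => by simp [Finset.sum_ite_eq']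
      _ = 1 := hsum
  · rw [Fin.sum_univ_two, Fin.sum_univ_two (f := fun y => ∑ m, p 1 x y m),
      Fin.sum_univ_two (f := fun m => p 1 x 0 m), Fin.sum_univ_two (f := fun m => p 1 x 1 m),
      hp0, hp0, hp1, hp1, hp10, hp11, if_pos rfl, if_neg (fun h => hxx h.symm)]
    ring_nf
  · rw [Fin.sum_univ_two, Fin.sum_univ_two (f := fun y => ∑ m, p 0 x y m),
      Fin.sum_univ_two (f := fun m => p 0 x 0 m), Fin.sum_univ_two (f := fun m => p 0 x 1 m),
      hp0, hp0, hp1, hp1, hp00, hp01, if_pos rfl, if_neg (fun h => hxx h.symm)]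
    ring_nf
end

section
/- (Attainability of the upper bound.) Let Y be binary (K = 2), J ≥ 2, and fix x ∈ {0,…,J−1}. Let a(t,x',y) > 0 for all t,y ∈ {0,1} and x' ∈ {0,…,J−1}, and b(t,y) ≥ 0 for all t,y ∈ {0,1}, with Σ_{t,x',y} a(t,x',y) + Σ_{t,y} b(t,y) = 1. Then there exists a joint distribution p of (T,X,Y,M) whose observed data matches these values, i.e. p(t,x',y,0) = a(t,x',y) for all (t,x',y) and p(t,+,y,1) = b(t,y) for all (t,y), such that P_p(Y=1|T=1,X=x) = (a(1,x,1) + b(1,1))/(a(1,x,0) + a(1,x,1) + b(1,1)) and P_p(Y=1|T=0,X=x) = a(0,x,1)/(a(0,x,0) + a(0,x,1) + b(0,0)). -/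
/-!
The observed data only fix the margin `p(t,+,y,1) = b(t,y)`, so the mass `b(t,y)` may be put
entirely on any single level of `X`. To make `P(Y=1 | T=1, X=x)` as large as possible put
`b(1,1)` at `x` and `b(1,0)` at some other level; to make `P(Y=1 | T=0, X=x)` as small as
possible put `b(0,0)` at `x` and `b(0,1)` elsewhere. Another level exists because `J ≥ 2`.
-/

open Finset

section FillMissing

variable {T X Y : Type*} [DecidableEq X]

def fillMissing (a : T → X → Y → ℝ) (b : T → Y → ℝ) (c : T → Y → X) :
    T → X → Y → Fin 2 → ℝ :=
  fun t x y => ![a t x y, (Pi.single (c t y) (b t y) : X → ℝ) x]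

variable (a : T → X → Y → ℝ) (b : T → Y → ℝ) (c : T → Y → X)

theorem fillMissing_nonneg (ha : ∀ t x y, 0 ≤ a t x y) (hb : ∀ t y, 0 ≤ b t y)
    (t : T) (x : X) (y : Y) (m : Fin 2) : 0 ≤ fillMissing a b c t x y m := by
  fin_cases m
  · exact ha t x y
  · exact (Pi.single_nonneg (α := fun _ : X => ℝ)).2 (hb t y) x

@[simp]
theorem fillMissing_zero (t : T) (x : X) (y : Y) : fillMissing a b c t x y 0 = a t x y := rfl

@[simp]
theorem fillMissing_one (t : T) (x : X) (y : Y) :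
    fillMissing a b c t x y 1 = (Pi.single (c t y) (b t y) : X → ℝ) x := rfl

theorem sum_fillMissing_one [Fintype X] (t : T) (y : Y) :
    ∑ x, fillMissing a b c t x y 1 = b t y := by
  simp

theorem sum_fillMissing_fin_two (t : T) (x : X) (y : Y) :
    ∑ m, fillMissing a b c t x y m = a t x y + (Pi.single (c t y) (b t y) : X → ℝ) x :=
  Fin.sum_univ_two _

theorem sum_fillMissing [Fintype T] [Fintype X] [Fintype Y] :
    ∑ t, ∑ x, ∑ y, ∑ m, fillMissing a b c t x y m
      = (∑ t, ∑ x, ∑ y, a t x y) + ∑ t, ∑ y, b t y := by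
  simp only [sum_fillMissing_fin_two, sum_add_distrib]
  congr 1
  refine sum_congr rfl fun t _ => ?_
  rw [sum_comm]
  exact sum_congr rfl fun y _ => sum_fillMissing_one a b c t y

end FillMissing

/-- Attainability of the upper bound of Theorem 5. Given any feasible observed
data (a, b) with J ≥ 2, there is a joint distribution p matching the observed data whose
subgroup outcome probabilities attain the upper-bound values. -/
theorem mechanism5_upper_bound_attainable (J : ℕ) (hJ : 2 ≤ J) (x : Fin J)
    (a : Fin 2 → Fin J → Fin 2 → ℝ) (b : Fin 2 → Fin 2 → ℝ)
    (ha_pos : ∀ t x' y, 0 < a t x' y)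
    (hb_nonneg : ∀ t y, 0 ≤ b t y)
    (hsum : (∑ t, ∑ x', ∑ y, a t x' y) + (∑ t, ∑ y, b t y) = 1) :
    ∃ p : Fin 2 → Fin J → Fin 2 → Fin 2 → ℝ,
      (∀ t x' y m, 0 ≤ p t x' y m) ∧
      (∑ t, ∑ x', ∑ y, ∑ m, p t x' y m = 1) ∧
      (∀ t x' y, p t x' y 0 = a t x' y) ∧
      (∀ t y, ∑ x', p t x' y 1 = b t y) ∧
      ((∑ m, p 1 x 1 m) / (∑ y, ∑ m, p 1 x y m)
        = (a 1 x 1 + b 1 1) / (a 1 x 0 + a 1 x 1 + b 1 1)) ∧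
      ((∑ m, p 0 x 1 m) / (∑ y, ∑ m, p 0 x y m)
        = a 0 x 1 / (a 0 x 0 + a 0 x 1 + b 0 0)) := by
  obtain ⟨x', hx'⟩ : ∃ x' : Fin J, x' ≠ x :=
    Fintype.exists_ne_of_one_lt_card (by rw [Fintype.card_fin]; omega) x
  refine ⟨fillMissing a b fun t y => if t = y then x else x',
    fillMissing_nonneg a b _ (fun t x y => (ha_pos t x y).le) hb_nonneg,
    (sum_fillMissing a b _).trans hsum, fillMissing_zero a b _, sum_fillMissing_one a b _,
    ?_, ?_⟩ <;>
  simp [Fin.sum_univ_two, hx'] <;> ring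
end
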